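/- arXiv:1401.0134 — 9 statements merged into one kernel-verified Lean document; each statement's English description precedes it below -/
import Mathlib

section
/- Let A be an n×n copositive matrix, let u be a zero of A with support I = Supp(u) of cardinality k, and set K = ℝ₊^k ∩ ker(A_I). Let v ∈ ℝ^n be a nonzero vector with Supp(v) ⊆ I. Then v is a zero of A if and only if the subvector v_I lies in K. -/
open Matrix

/-- A symmetric matrix `A` is copositive if `xᵀ A x ≥ 0` for all entrywise nonnegative `x`. -/
def Copositive {n : ℕ} (A : Matrix (Fin n) (Fin n) ℝ) : Prop :=
  A.IsSymm ∧ ∀ x : Fin n → ℝ, (∀ i, 0 ≤ x i) → 0 ≤ x ⬝ᵥ A.mulVec x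

/-- The support of a vector. -/
def Supp {ι : Type*} (u : ι → ℝ) : Set ι := {i | u i ≠ 0}

/-- A zero of a copositive matrix: a nonzero nonnegative vector `u` with `uᵀ A u = 0`. -/
def IsZeroOf {n : ℕ} (A : Matrix (Fin n) (Fin n) ℝ) (u : Fin n → ℝ) : Prop :=
  u ≠ 0 ∧ (∀ i, 0 ≤ u i) ∧ u ⬝ᵥ A.mulVec u = 0

/-- A minimal zero: a zero such that no zero has support strictly contained in its support. -/
def IsMinimalZeroOf {n : ℕ} (A : Matrix (Fin n) (Fin n) ℝ) (u : Fin n → ℝ) : Prop :=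
  IsZeroOf A u ∧ ¬ ∃ v, IsZeroOf A v ∧ Supp v ⊂ Supp u

/-- The principal submatrix of `A` with rows and columns in `I`. -/
def subMat {n : ℕ} (A : Matrix (Fin n) (Fin n) ℝ) (I : Finset (Fin n)) :
    Matrix {i // i ∈ I} {i // i ∈ I} ℝ :=
  A.submatrix Subtype.val Subtype.val

/-- The subvector of `u` with indices in `I`. -/
def subVec {n : ℕ} (u : Fin n → ℝ) (I : Finset (Fin n)) : {i // i ∈ I} → ℝ :=
  fun i => u i.val

/-- Irreducibility of a copositive matrix `A` with respect to a set `M` of matrices. -/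
def IrreducibleWrtSet {n : ℕ} (A : Matrix (Fin n) (Fin n) ℝ)
    (M : Set (Matrix (Fin n) (Fin n) ℝ)) : Prop :=
  ¬ ∃ γ : ℝ, 0 < γ ∧ ∃ B ∈ M, B ≠ 0 ∧ Copositive (A - γ • B)

/-- Irreducibility of a copositive matrix `A` with respect to a single matrix `M`. -/
def IrreducibleWrtMat {n : ℕ} (A M : Matrix (Fin n) (Fin n) ℝ) : Prop :=
  ¬ ∃ γ : ℝ, 0 < γ ∧ Copositive (A - γ • M)

/-- An extremal element of a cone `K` of vectors. -/
def IsExtremalIn {ι : Type*} (K : Set (ι → ℝ)) (u : ι → ℝ) : Prop :=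
  u ∈ K ∧ u ≠ 0 ∧ ∀ v w, v ∈ K → w ∈ K → u = v + w →
    (∃ a : ℝ, 0 ≤ a ∧ v = a • u) ∧ (∃ b : ℝ, 0 ≤ b ∧ w = b • u)

/-- The matrix with entries 1 at positions `(i,j)` and `(j,i)` and 0 elsewhere. -/
def Eij {n : ℕ} (i j : Fin n) : Matrix (Fin n) (Fin n) ℝ :=
  fun a b => if (a = i ∧ b = j) ∨ (a = j ∧ b = i) then 1 else 0

/-! The proof rests on the first-order optimality conditions at a zero `w` of a copositive
matrix `A`: since `w` minimises `x ↦ xᵀ A x` on the nonnegative orthant, `A w ≥ 0`, and then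
`wᵀ (A w) = 0` forces `(A w)ᵢ = 0` on `Supp w`. If `v` is a zero with `Supp v ⊆ Supp u`, the
same conditions at `u` give `uᵀ A v = vᵀ A u = 0`, and since `A v ≥ 0` this makes `A v` vanish
on all of `Supp u`. Conversely, `A v = 0` on `Supp u ⊇ Supp v` gives `vᵀ A v = 0` directly. -/

section DotProduct

variable {ι : Type*} [Fintype ι]

lemma dotProduct_eq_zero_of_forall_mem_supp {x y : ι → ℝ} (h : ∀ i ∈ Supp x, y i = 0) :
    x ⬝ᵥ y = 0 :=
  Finset.sum_eq_zero fun i _ => by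
    by_cases hi : i ∈ Supp x
    · rw [h i hi, mul_zero]
    · rw [show x i = 0 from not_not.mp hi, zero_mul]

lemma apply_eq_zero_of_dotProduct_eq_zero {x y : ι → ℝ} (hx : ∀ i, 0 ≤ x i)
    (hy : ∀ i, 0 ≤ y i) (h : x ⬝ᵥ y = 0) {i : ι} (hi : i ∈ Supp x) : y i = 0 := by
  have hterms := (Finset.sum_eq_zero_iff_of_nonneg fun j _ => mul_nonneg (hx j) (hy j)).mp h
  exact (mul_eq_zero.mp (hterms i (Finset.mem_univ i))).resolve_left hi

lemma Matrix.IsSymm.dotProduct_mulVec_comm {A : Matrix ι ι ℝ} (hA : A.IsSymm) (x y : ι → ℝ) :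
    x ⬝ᵥ A *ᵥ y = y ⬝ᵥ A *ᵥ x := by
  rw [dotProduct_mulVec, ← vecMul_transpose, hA.eq, dotProduct_comm]

lemma Matrix.IsSymm.dotProduct_mulVec_add_smul_single [DecidableEq ι] {A : Matrix ι ι ℝ}
    (hA : A.IsSymm) (w : ι → ℝ) (i : ι) (t : ℝ) :
    (w + t • Pi.single i 1) ⬝ᵥ A *ᵥ (w + t • Pi.single i 1) =
      w ⬝ᵥ A *ᵥ w + 2 * t * (A *ᵥ w) i + t ^ 2 * A i i := by
  have hcross : w ⬝ᵥ A *ᵥ Pi.single i 1 = (A *ᵥ w) i := by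
    rw [hA.dotProduct_mulVec_comm, single_dotProduct, one_mul]
  have hdiag : Pi.single i 1 ⬝ᵥ A *ᵥ Pi.single i 1 = A i i := by
    rw [single_dotProduct, one_mul, mulVec_single_one, col_apply]
  simp only [mulVec_add, mulVec_smul, dotProduct_add, add_dotProduct, dotProduct_smul,
    smul_dotProduct, single_dotProduct, one_mul, hcross, hdiag, smul_eq_mul]
  ring

end DotProduct

lemma nonneg_of_forall_pos_nonneg_add_mul {c d : ℝ} (h : ∀ t > 0, 0 ≤ c + t * d) : 0 ≤ c := by
  by_contra! hc
  have hd : 0 < d := by linarith [h 1 one_pos]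
  have := h (-c / (2 * d)) (div_pos (neg_pos.mpr hc) (by positivity))
  have hmid : -c / (2 * d) * d = -c / 2 := by field_simp
  linarith

namespace Copositive

variable {n : ℕ} {A : Matrix (Fin n) (Fin n) ℝ} {u v w : Fin n → ℝ}

lemma mulVec_apply_nonneg (hA : Copositive A) (hw : ∀ i, 0 ≤ w i) (hq : w ⬝ᵥ A *ᵥ w = 0)
    (i : Fin n) : 0 ≤ (A *ᵥ w) i := by
  suffices 0 ≤ 2 * (A *ᵥ w) i by linarith
  refine nonneg_of_forall_pos_nonneg_add_mul (d := A i i) fun t ht => ?_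
  have hpert : ∀ j, 0 ≤ (w + t • Pi.single i 1 : Fin n → ℝ) j := fun j => by
    by_cases hj : j = i
    · subst hj; simp [add_nonneg (hw j) ht.le]
    · simp [hj, hw j]
  have := hA.2 _ hpert
  rw [hA.1.dotProduct_mulVec_add_smul_single, hq] at this
  exact nonneg_of_mul_nonneg_right (by linarith) ht

lemma mulVec_apply_eq_zero (hA : Copositive A) (hw : ∀ i, 0 ≤ w i)
    (hq : w ⬝ᵥ A *ᵥ w = 0) {i : Fin n} (hi : i ∈ Supp w) : (A *ᵥ w) i = 0 :=
  apply_eq_zero_of_dotProduct_eq_zero hw (hA.mulVec_apply_nonneg hw hq) hq hi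

lemma mulVec_apply_eq_zero_of_supp_subset (hA : Copositive A) (hu : IsZeroOf A u)
    (hv : IsZeroOf A v) (hvu : Supp v ⊆ Supp u) {i : Fin n} (hi : i ∈ Supp u) :
    (A *ᵥ v) i = 0 := by
  obtain ⟨-, hun, huq⟩ := hu
  obtain ⟨-, hvn, hvq⟩ := hv
  have hvAu : v ⬝ᵥ A *ᵥ u = 0 := dotProduct_eq_zero_of_forall_mem_supp fun j hj =>
    hA.mulVec_apply_eq_zero hun huq (hvu hj)
  rw [← hA.1.dotProduct_mulVec_comm] at hvAu
  exact apply_eq_zero_of_dotProduct_eq_zero hun (hA.mulVec_apply_nonneg hvn hvq) hvAu hi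

end Copositive

lemma subMat_mulVec_subVec {n : ℕ} (A : Matrix (Fin n) (Fin n) ℝ) {I : Finset (Fin n)}
    {v : Fin n → ℝ} (hv : Supp v ⊆ I) (j : {i // i ∈ I}) :
    (subMat A I *ᵥ subVec v I) j = (A *ᵥ v) j := by
  simp only [subMat, subVec, mulVec, dotProduct, submatrix_apply]
  rw [Finset.sum_coe_sort I fun i => A j i * v i]
  refine Finset.sum_subset (Finset.subset_univ I) fun i _ hi => ?_
  rw [show v i = 0 from not_not.mp fun h => hi (hv h), mul_zero]

theorem stmt1 {n : ℕ} (A : Matrix (Fin n) (Fin n) ℝ) (hA : Copositive A)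
    (u : Fin n → ℝ) (hu : IsZeroOf A u)
    (I : Finset (Fin n)) (hI : (I : Set (Fin n)) = Supp u)
    (K : Set ({i // i ∈ I} → ℝ))
    (hK : K = {x | (∀ i, 0 ≤ x i) ∧ (subMat A I).mulVec x = 0})
    (v : Fin n → ℝ) (hv0 : v ≠ 0) (hvI : Supp v ⊆ (I : Set (Fin n))) :
    IsZeroOf A v ↔ subVec v I ∈ K := by
  subst hK
  have hsub := subMat_mulVec_subVec A hvI
  constructor
  · intro hv
    refine ⟨fun j => hv.2.1 j, funext fun j => ?_⟩
    rw [hsub, Pi.zero_apply]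
    exact hA.mulVec_apply_eq_zero_of_supp_subset hu hv (hI ▸ hvI) (hI ▸ j.2)
  · rintro ⟨hvn, hAv⟩
    refine ⟨hv0, fun i => ?_, dotProduct_eq_zero_of_forall_mem_supp fun i hi => ?_⟩
    · by_cases hi : i ∈ Supp v
      · exact hvn ⟨i, hvI hi⟩
      · rw [show v i = 0 from not_not.mp hi]
    · simpa [hsub] using congrFun hAv ⟨i, hvI hi⟩
end

section
/- Let L ⊆ ℝ^k be a linear subspace, let K = ℝ₊^k ∩ L, and let u ∈ K be a nonzero vector. Then the following are equivalent: (a) u is an extremal element of K; (b) every vector v ∈ K with Supp(v) ⊆ Supp(u) is a scalar multiple of u. -/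
open Matrix

theorem stmt2 {k : ℕ} (L : Submodule ℝ (Fin k → ℝ))
    (K : Set (Fin k → ℝ)) (hK : K = {x | (∀ i, 0 ≤ x i) ∧ x ∈ L})
    (u : Fin k → ℝ) (huK : u ∈ K) (hu0 : u ≠ 0) :
    IsExtremalIn K u ↔ ∀ v ∈ K, Supp v ⊆ Supp u → ∃ c : ℝ, v = c • u := by
  subst hK
  obtain ⟨hu_nonneg, huL⟩ := huK
  constructor
  · rintro ⟨-, -, hext⟩ v ⟨hv_nonneg, hvL⟩ hsupp
    by_cases hv0 : v = 0
    · exact ⟨0, by simp [hv0]⟩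
    · have hk : 0 < k := by
        by_contra h
        apply hu0
        funext i
        exact absurd i.2 (by omega)
      set f : Fin k → ℝ := fun i => if 0 < v i then u i / v i else 1 with hf
      have hne : (Finset.univ : Finset (Fin k)).Nonempty := ⟨⟨0, hk⟩, Finset.mem_univ _⟩
      set ε := Finset.univ.inf' hne f with hε
      have hfpos : ∀ i, 0 < f i := by
        intro i
        simp only [hf]
        split_ifs with h
        · have hiu : u i ≠ 0 := hsupp (by simpa [Supp] using h.ne')
          have : 0 < u i := lt_of_le_of_ne (hu_nonneg i) (Ne.symm hiu)
          exact div_pos this h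
        · norm_num
      have hεpos : 0 < ε := by
        rw [hε, Finset.lt_inf'_iff]
        exact fun i _ => hfpos i
      have hεle : ∀ i, ε ≤ f i := fun i => Finset.inf'_le f (Finset.mem_univ i)
      have hnn : ∀ i, 0 ≤ u i - ε * v i := by
        intro i
        rcases lt_or_ge 0 (v i) with h | h
        · have := hεle i
          rw [hf] at this
          simp only [if_pos h] at this
          have := (le_div_iff₀ h).mp this
          linarith
        · have hv0i : v i = 0 := le_antisymm h (hv_nonneg i)
          rw [hv0i]
          simpa using hu_nonneg i
      have hmem1 : (ε • v) ∈ {x : Fin k → ℝ | (∀ i, 0 ≤ x i) ∧ x ∈ L} :=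
        ⟨fun i => mul_nonneg hεpos.le (hv_nonneg i), L.smul_mem ε hvL⟩
      have hmem2 : (u - ε • v) ∈ {x : Fin k → ℝ | (∀ i, 0 ≤ x i) ∧ x ∈ L} :=
        ⟨fun i => hnn i, L.sub_mem huL (L.smul_mem ε hvL)⟩
      obtain ⟨⟨a, _, ha⟩, -⟩ := hext (ε • v) (u - ε • v) hmem1 hmem2 (by abel)
      refine ⟨a / ε, ?_⟩
      have : v = ε⁻¹ • (ε • v) := by rw [smul_smul, inv_mul_cancel₀ hεpos.ne', one_smul]
      rw [this, ha, smul_smul, div_eq_inv_mul]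
  · intro h
    refine ⟨⟨hu_nonneg, huL⟩, hu0, ?_⟩
    intro v w hv hw huvw
    obtain ⟨i₀, hi₀⟩ := Function.ne_iff.mp hu0
    have hui₀ : 0 < u i₀ := lt_of_le_of_ne (hu_nonneg i₀) (Ne.symm hi₀)
    have key : ∀ x ∈ {x : Fin k → ℝ | (∀ i, 0 ≤ x i) ∧ x ∈ L}, (∀ i, x i ≤ u i) →
        ∃ a : ℝ, 0 ≤ a ∧ x = a • u := by
      intro x hx hxu
      have hsupp : Supp x ⊆ Supp u := by
        intro i hi
        have hxi : 0 < x i := lt_of_le_of_ne (hx.1 i) (Ne.symm hi)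
        exact fun h0 => absurd (hxu i) (by rw [h0]; exact not_le.mpr hxi)
      obtain ⟨c, hc⟩ := h x hx hsupp
      refine ⟨c, ?_, hc⟩
      have := hx.1 i₀
      rw [hc] at this
      exact nonneg_of_mul_nonneg_right (by simpa [mul_comm] using this) hui₀
    have hvle : ∀ i, v i ≤ u i := by
      intro i
      have := hw.1 i
      have : u i = v i + w i := congrFun huvw i
      linarith [hw.1 i]
    have hwle : ∀ i, w i ≤ u i := by
      intro i
      have : u i = v i + w i := congrFun huvw i
      linarith [hv.1 i]
    exact ⟨key v hv hvle, key w hw hwle⟩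
end

section
/- Let A be an n×n copositive matrix, let u be a zero of A with support I = Supp(u) of cardinality k, and set K = ℝ₊^k ∩ ker(A_I). Let v ∈ ℝ^n be a nonzero vector with Supp(v) ⊆ I. Then v is a minimal zero of A if and only if v_I is an extremal element of the cone K. -/
open Matrix

/-!
Since `u` is a zero of `A` with strictly positive entries on `I`, the copositive form of `A_I`
attains its minimum `0` at an interior point of the orthant, so `A_I` is positive semidefinite.
Hence the zeros of `A` supported in `I` are exactly the nonzero vectors of the cone
`K = ℝ₊^I ∩ ker A_I`, and minimality of a zero becomes minimality of support within `K`.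
In a cone cut out of the orthant by a subspace, the elements of minimal support are the extremal
ones: if `y ∈ K` has support inside that of `x`, then `x - α y ∈ K` for the largest admissible
`α > 0`, and this vector has strictly smaller support.
-/

section Cone

variable {ι : Type*} [Fintype ι]

def nonnegCone (S : Submodule ℝ (ι → ℝ)) : Set (ι → ℝ) :=
  {x | (∀ i, 0 ≤ x i) ∧ x ∈ S}

lemma exists_pos_smul_le_of_supp_subset {x y : ι → ℝ} (hx : ∀ i, 0 ≤ x i)
    (hy : ∀ i, 0 ≤ y i) (hy0 : y ≠ 0) (hyx : Supp y ⊆ Supp x) :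
    ∃ α > 0, (∀ i, α * y i ≤ x i) ∧ ∃ i, y i ≠ 0 ∧ x i = α * y i := by
  classical
  set T := Finset.univ.filter fun i => y i ≠ 0
  have hT : T.Nonempty := by
    obtain ⟨i, hi⟩ := Function.ne_iff.mp hy0
    exact ⟨i, by simpa [T] using hi⟩
  have hy_pos : ∀ i ∈ T, 0 < y i := fun i hi =>
    (hy i).lt_of_ne' (Finset.mem_filter.mp hi).2
  have hx_pos : ∀ i ∈ T, 0 < x i := fun i hi =>
    (hx i).lt_of_ne' (hyx (Finset.mem_filter.mp hi).2)
  obtain ⟨i₀, hi₀, hα⟩ := T.exists_mem_eq_inf' hT fun i => x i / y i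
  refine ⟨T.inf' hT fun i => x i / y i, ?_, fun i => ?_, i₀, (hy_pos i₀ hi₀).ne', ?_⟩
  · exact (Finset.lt_inf'_iff hT).2 fun i hi => div_pos (hx_pos i hi) (hy_pos i hi)
  · by_cases hi : y i = 0
    · simpa [hi] using hx i
    · have hiT : i ∈ T := by simpa [T] using hi
      exact (le_div_iff₀ (hy_pos i hiT)).mp (T.inf'_le _ hiT)
  · rw [hα, div_mul_cancel₀ _ (hy_pos i₀ hi₀).ne']

variable {S : Submodule ℝ (ι → ℝ)}

lemma not_supp_ssubset_of_isExtremalIn {x : ι → ℝ} (hx : IsExtremalIn (nonnegCone S) x)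
    {y : ι → ℝ} (hy : y ∈ nonnegCone S) (hy0 : y ≠ 0) : ¬ Supp y ⊂ Supp x := by
  obtain ⟨⟨hx_nonneg, hxS⟩, -, hextr⟩ := hx
  intro hyx
  obtain ⟨α, hα, hle, -⟩ := exists_pos_smul_le_of_supp_subset hx_nonneg hy.1 hy0 hyx.subset
  have hαy : α • y ∈ nonnegCone S :=
    ⟨fun i => mul_nonneg hα.le (hy.1 i), S.smul_mem α hy.2⟩
  have hrest : x - α • y ∈ nonnegCone S :=
    ⟨fun i => sub_nonneg.2 (hle i), S.sub_mem hxS (S.smul_mem α hy.2)⟩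
  obtain ⟨⟨a, -, ha⟩, -⟩ := hextr _ _ hαy hrest (add_sub_cancel _ _).symm
  obtain ⟨j, hjx, hjy⟩ := Set.exists_of_ssubset hyx
  have hyj : y j = 0 := not_not.mp hjy
  have hxj : a * x j = 0 := by simpa [hyj] using (congrFun ha j).symm
  have ha0 : a = 0 := (mul_eq_zero.mp hxj).resolve_right hjx
  rw [ha0, zero_smul, smul_eq_zero] at ha
  exact ha.elim hα.ne' hy0

lemma isExtremalIn_of_not_supp_ssubset {x : ι → ℝ} (hx : x ∈ nonnegCone S) (hx0 : x ≠ 0)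
    (hmin : ∀ y ∈ nonnegCone S, y ≠ 0 → ¬ Supp y ⊂ Supp x) :
    IsExtremalIn (nonnegCone S) x := by
  refine ⟨hx, hx0, fun p q hp hq hpq => ?_⟩
  by_cases hp0 : p = 0
  · exact ⟨⟨0, le_rfl, by rw [hp0, zero_smul]⟩,
      ⟨1, zero_le_one, by rw [one_smul, hpq, hp0, zero_add]⟩⟩
  have hp_le : ∀ i, p i ≤ x i := fun i => by
    rw [hpq]; exact le_add_of_nonneg_right (hq.1 i)
  have hpx : Supp p ⊆ Supp x := fun i hi hxi =>
    hi (le_antisymm (hxi ▸ hp_le i) (hp.1 i))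
  obtain ⟨α, hα, hle, i₀, hpi₀, hxi₀⟩ := exists_pos_smul_le_of_supp_subset hx.1 hp.1 hp0 hpx
  have hr : x - α • p ∈ nonnegCone S :=
    ⟨fun i => sub_nonneg.2 (hle i), S.sub_mem hx.2 (S.smul_mem α hp.2)⟩
  have hr_supp : Supp (x - α • p) ⊂ Supp x := by
    refine Set.ssubset_iff_subset_ne.2 ⟨fun i hi hxi => hi ?_, fun h => ?_⟩
    · have hpi : p i = 0 := le_antisymm (hxi ▸ hp_le i) (hp.1 i)
      simp [hxi, hpi]
    · have : i₀ ∈ Supp x := show x i₀ ≠ 0 by rw [hxi₀]; exact mul_ne_zero hα.ne' hpi₀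
      rw [← h] at this
      exact this (by simp [hxi₀])
  have hx_eq : x = α • p := by
    by_contra h
    exact hmin _ hr (sub_ne_zero.2 h) hr_supp
  have hα1 : 1 ≤ α := by
    have := hp_le i₀
    rw [hxi₀] at this
    exact (le_mul_iff_one_le_left ((hp.1 i₀).lt_of_ne' hpi₀)).mp this
  have hp_eq : p = α⁻¹ • x := by rw [hx_eq, inv_smul_smul₀ hα.ne']
  refine ⟨⟨α⁻¹, inv_nonneg.2 hα.le, hp_eq⟩,
    ⟨1 - α⁻¹, sub_nonneg.2 (inv_le_one_of_one_le₀ hα1), ?_⟩⟩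
  rw [eq_sub_of_add_eq' hpq.symm, hp_eq, sub_smul, one_smul]

lemma isExtremalIn_nonnegCone_iff {x : ι → ℝ} :
    IsExtremalIn (nonnegCone S) x ↔
      x ∈ nonnegCone S ∧ x ≠ 0 ∧ ∀ y ∈ nonnegCone S, y ≠ 0 → ¬ Supp y ⊂ Supp x :=
  ⟨fun h => ⟨h.1, h.2.1, fun _ hy hy0 => not_supp_ssubset_of_isExtremalIn h hy hy0⟩,
    fun ⟨hx, hx0, hmin⟩ => isExtremalIn_of_not_supp_ssubset hx hx0 hmin⟩

end Cone

lemma posSemidef_of_copositive_of_pos_zero {ι : Type*} [Fintype ι] {B : Matrix ι ι ℝ}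
    (hB : B.IsSymm) (hcop : ∀ x : ι → ℝ, (∀ i, 0 ≤ x i) → 0 ≤ x ⬝ᵥ B *ᵥ x)
    {w : ι → ℝ} (hw : ∀ i, 0 < w i) (hw0 : w ⬝ᵥ B *ᵥ w = 0) : B.PosSemidef := by
  refine posSemidef_iff_dotProduct_mulVec.2 ⟨hB, fun y => ?_⟩
  rw [show star y = y from rfl]
  have hnear : ∀ᶠ ε in nhds (0 : ℝ), ∀ i, 0 ≤ w i + ε * y i :=
    Filter.eventually_all.2 fun i =>
      (continuousAt_const.eventually_lt (f := fun _ => (0 : ℝ))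
        (g := fun ε => w i + ε * y i) (by fun_prop) (by simpa using hw i)).mono fun _ h => h.le
  obtain ⟨ε, ⟨hεpos, hεneg⟩, hε0⟩ :=
    (((hnear.and ((continuous_neg.tendsto' 0 0 neg_zero).eventually hnear)).filter_mono
      nhdsWithin_le_nhds).and (self_mem_nhdsWithin (s := {0}ᶜ))).exists
  have hquad : ∀ t : ℝ, (w + t • y) ⬝ᵥ B *ᵥ (w + t • y) =
      t * (y ⬝ᵥ B *ᵥ w + w ⬝ᵥ B *ᵥ y) + t ^ 2 * (y ⬝ᵥ B *ᵥ y) := by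
    intro t
    simp only [mulVec_add, mulVec_smul, dotProduct_add, add_dotProduct, dotProduct_smul,
      smul_dotProduct, smul_eq_mul, hw0]
    ring
  have hpos := hquad ε ▸ hcop _ hεpos
  have hneg := hquad (-ε) ▸ hcop _ hεneg
  nlinarith [sq_pos_of_ne_zero hε0]

section Restriction

variable {n : ℕ} {I : Finset (Fin n)}

lemma sum_eq_sum_subtype_of_supp_subset {f : Fin n → ℝ} (hf : Supp f ⊆ I) :
    ∑ i, f i = ∑ i : {i // i ∈ I}, f i := by
  rw [Finset.sum_coe_sort]
  exact (Finset.sum_subset (Finset.subset_univ I) fun j _ hj => not_not.mp (hj <| hf ·)).symm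

lemma subVec_mulVec_of_supp_subset (A : Matrix (Fin n) (Fin n) ℝ) {x : Fin n → ℝ}
    (hx : Supp x ⊆ I) : subVec (A *ᵥ x) I = subMat A I *ᵥ subVec x I := by
  funext i
  exact sum_eq_sum_subtype_of_supp_subset fun j hj => hx (right_ne_zero_of_mul hj)

lemma dotProduct_mulVec_eq_subMat (A : Matrix (Fin n) (Fin n) ℝ) {x : Fin n → ℝ}
    (hx : Supp x ⊆ I) : x ⬝ᵥ A *ᵥ x = subVec x I ⬝ᵥ subMat A I *ᵥ subVec x I := by
  rw [← subVec_mulVec_of_supp_subset A hx]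
  exact sum_eq_sum_subtype_of_supp_subset fun j hj => hx (left_ne_zero_of_mul hj)

lemma subVec_eq_zero_iff {x : Fin n → ℝ} (hx : Supp x ⊆ I) : subVec x I = 0 ↔ x = 0 := by
  refine ⟨fun h => funext fun i => ?_, fun h => h ▸ rfl⟩
  by_contra hi
  exact hi (congrFun h ⟨i, hx hi⟩)

lemma supp_subVec_ssubset_iff {x y : Fin n → ℝ} (hx : Supp x ⊆ I) (hy : Supp y ⊆ I) :
    Supp (subVec y I) ⊂ Supp (subVec x I) ↔ Supp y ⊂ Supp x := by
  have hrange : Set.range (Subtype.val : {i // i ∈ I} → Fin n) = I := Subtype.range_val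
  change Subtype.val ⁻¹' Supp y ⊂ Subtype.val ⁻¹' Supp x ↔ _
  rw [← Set.range_inter_ssubset_iff_preimage_ssubset, hrange,
    Set.inter_eq_right.2 hx, Set.inter_eq_right.2 hy]

lemma subVec_extend (z : {i // i ∈ I} → ℝ) :
    subVec (Function.extend Subtype.val z 0) I = z :=
  funext (Subtype.val_injective.extend_apply z 0)

lemma supp_extend_subset (z : {i // i ∈ I} → ℝ) :
    Supp (Function.extend Subtype.val z 0) ⊆ I := by
  intro i hi
  by_contra hiI
  exact hi (Function.extend_apply' _ _ _ fun ⟨j, hj⟩ => hiI (hj ▸ j.2))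

lemma nonneg_extend {z : {i // i ∈ I} → ℝ} (hz : ∀ i, 0 ≤ z i) (i : Fin n) :
    0 ≤ Function.extend Subtype.val z 0 i := by
  by_cases hi : i ∈ I
  · exact (Subtype.val_injective.extend_apply z 0 ⟨i, hi⟩).symm ▸ hz _
  · rw [Function.extend_apply' _ _ _ fun ⟨j, hj⟩ => hi (hj ▸ j.2)]
    rfl

end Restriction

section Zeros

variable {n : ℕ} {A : Matrix (Fin n) (Fin n) ℝ} {I : Finset (Fin n)}

lemma posSemidef_subMat_of_isZeroOf (hA : Copositive A) {u : Fin n → ℝ} (hu : IsZeroOf A u)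
    (hI : (I : Set (Fin n)) = Supp u) : (subMat A I).PosSemidef := by
  refine posSemidef_of_copositive_of_pos_zero (w := subVec u I) (hA.1.submatrix Subtype.val)
    (fun z hz => ?_) (fun i => (hu.2.1 i).lt_of_ne' (hI.le i.2)) ?_
  · have := hA.2 _ (nonneg_extend hz)
    rwa [dotProduct_mulVec_eq_subMat A (supp_extend_subset z), subVec_extend] at this
  · rw [← dotProduct_mulVec_eq_subMat A hI.ge, hu.2.2]

lemma isZeroOf_iff_of_supp_subset (hpsd : (subMat A I).PosSemidef) {x : Fin n → ℝ}
    (hx : Supp x ⊆ I) :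
    IsZeroOf A x ↔
      subVec x I ∈ nonnegCone (LinearMap.ker (subMat A I).mulVecLin) ∧ subVec x I ≠ 0 := by
  have hnonneg : (∀ i, 0 ≤ x i) ↔ ∀ i, 0 ≤ subVec x I i := by
    refine ⟨fun h i => h i, fun h i => ?_⟩
    by_cases hi : i ∈ I
    · exact h ⟨i, hi⟩
    · exact (not_not.mp fun hxi => hi (hx hxi)).ge
  have hker : subMat A I *ᵥ subVec x I = 0 ↔
      subVec x I ⬝ᵥ subMat A I *ᵥ subVec x I = 0 :=
    (hpsd.dotProduct_mulVec_zero_iff _).symm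
  rw [IsZeroOf, dotProduct_mulVec_eq_subMat A hx, Ne, ← subVec_eq_zero_iff hx, hnonneg]
  change _ ↔ ((∀ i, _) ∧ (subMat A I).mulVecLin (subVec x I) = 0) ∧ _
  rw [mulVecLin_apply, hker]
  tauto

lemma isMinimalZeroOf_iff_of_supp_subset (hpsd : (subMat A I).PosSemidef) {v : Fin n → ℝ}
    (hv : Supp v ⊆ I) :
    IsMinimalZeroOf A v ↔
      subVec v I ∈ nonnegCone (LinearMap.ker (subMat A I).mulVecLin) ∧ subVec v I ≠ 0 ∧
        ∀ y ∈ nonnegCone (LinearMap.ker (subMat A I).mulVecLin), y ≠ 0 →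
          ¬ Supp y ⊂ Supp (subVec v I) := by
  rw [IsMinimalZeroOf, isZeroOf_iff_of_supp_subset hpsd hv, and_assoc]
  refine and_congr_right fun _ => and_congr_right fun _ => ⟨?_, ?_⟩
  · rintro hmin y hy hy0 hyv
    have hext := supp_extend_subset y
    refine hmin ⟨Function.extend Subtype.val y 0, ?_, ?_⟩
    · rw [isZeroOf_iff_of_supp_subset hpsd hext, subVec_extend]
      exact ⟨hy, hy0⟩
    · rwa [← supp_subVec_ssubset_iff hv hext, subVec_extend]
  · rintro hmin ⟨w, hw, hwv⟩
    have hwI : Supp w ⊆ I := hwv.subset.trans hv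
    rw [isZeroOf_iff_of_supp_subset hpsd hwI] at hw
    exact hmin _ hw.1 hw.2 ((supp_subVec_ssubset_iff hv hwI).2 hwv)

end Zeros

theorem stmt3_general {n : ℕ} (A : Matrix (Fin n) (Fin n) ℝ) (hA : Copositive A)
    (u : Fin n → ℝ) (hu : IsZeroOf A u)
    (I : Finset (Fin n)) (hI : (I : Set (Fin n)) = Supp u)
    (K : Set ({i // i ∈ I} → ℝ))
    (hK : K = {x | (∀ i, 0 ≤ x i) ∧ (subMat A I).mulVec x = 0})
    (v : Fin n → ℝ) (hvI : Supp v ⊆ (I : Set (Fin n))) :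
    IsMinimalZeroOf A v ↔ IsExtremalIn K (subVec v I) := by
  subst hK
  exact (isMinimalZeroOf_iff_of_supp_subset (posSemidef_subMat_of_isZeroOf hA hu hI) hvI).trans
    isExtremalIn_nonnegCone_iff.symm

theorem stmt3 {n : ℕ} (A : Matrix (Fin n) (Fin n) ℝ) (hA : Copositive A)
    (u : Fin n → ℝ) (hu : IsZeroOf A u)
    (I : Finset (Fin n)) (hI : (I : Set (Fin n)) = Supp u)
    (K : Set ({i // i ∈ I} → ℝ))
    (hK : K = {x | (∀ i, 0 ≤ x i) ∧ (subMat A I).mulVec x = 0})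
    (v : Fin n → ℝ) (hv0 : v ≠ 0) (hvI : Supp v ⊆ (I : Set (Fin n))) :
    IsMinimalZeroOf A v ↔ IsExtremalIn K (subVec v I) :=
  stmt3_general A hA u hu I hI K hK v hvI
end

section
/- Let A be an n×n copositive matrix and let u be a zero of A. Then u can be written as a finite sum of minimal zeros of A. -/
open Matrix

/-!
If `v` is a zero whose support lies strictly inside that of the zero `u`, the quadratic form
along the line `u + s • v` is `s` times the cross term `uᵀAv + vᵀAu`. Both `u + v` and `u - t • v`,
with `t = min {uᵢ / vᵢ | vᵢ ≠ 0}`, are nonnegative, so copositivity forces the cross term to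
vanish. Hence `u = (u - t • v) + t • v` splits `u` into two zeros of strictly smaller support,
and induction on the support writes `u` as a sum of minimal zeros.
-/

theorem dotProduct_mulVec_add_smul {ι R : Type*} [Fintype ι] [CommRing R]
    (A : Matrix ι ι R) (u v : ι → R) (s : R) :
    (u + s • v) ⬝ᵥ A *ᵥ (u + s • v) =
      u ⬝ᵥ A *ᵥ u + s * (u ⬝ᵥ A *ᵥ v + v ⬝ᵥ A *ᵥ u) + s ^ 2 * (v ⬝ᵥ A *ᵥ v) := by
  simp only [mulVec_add, mulVec_smul, dotProduct_add, add_dotProduct, dotProduct_smul,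
    smul_dotProduct, smul_eq_mul]
  ring

theorem supp_smul {ι : Type*} {t : ℝ} (ht : t ≠ 0) (v : ι → ℝ) : Supp (t • v) = Supp v := by
  ext i
  simp [Supp, ht]

theorem supp_sub_smul_subset {ι : Type*} {u v : ι → ℝ} (hvu : Supp v ⊆ Supp u) (t : ℝ) :
    Supp (u - t • v) ⊆ Supp u := by
  intro i hi hui
  have hvi : v i = 0 := by_contra fun hvi => hvu hvi hui
  exact hi (by simp [hui, hvi])

theorem exists_smul_le_of_supp_subset {ι : Type*} [Fintype ι] {u v : ι → ℝ}
    (hu : ∀ i, 0 ≤ u i) (hv : ∀ i, 0 ≤ v i) (hv0 : v ≠ 0) (hvu : Supp v ⊆ Supp u) :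
    ∃ t > 0, t • v ≤ u ∧ ∃ i ∈ Supp v, u i = t * v i := by
  classical
  have hS : (Finset.univ.filter (v · ≠ 0)).Nonempty := by
    obtain ⟨i, hi⟩ := Function.ne_iff.mp hv0
    exact ⟨i, by simpa using hi⟩
  obtain ⟨i, hi, hmin⟩ := Finset.exists_min_image _ (fun i => u i / v i) hS
  have hvi : v i ≠ 0 := (Finset.mem_filter.mp hi).2
  have hvi_pos : 0 < v i := (hv i).lt_of_ne' hvi
  refine ⟨u i / v i, div_pos ((hu i).lt_of_ne' (hvu hvi)) hvi_pos, fun j => ?_, i, hvi,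
    (div_mul_cancel₀ _ hvi).symm⟩
  by_cases hvj : v j = 0
  · simpa [hvj] using hu j
  · have := hmin j (by simpa using hvj)
    simpa using (le_div_iff₀ ((hv j).lt_of_ne' hvj)).mp this

namespace IsZeroOf

variable {n : ℕ} {A : Matrix (Fin n) (Fin n) ℝ} {u v : Fin n → ℝ}

theorem smul (hv : IsZeroOf A v) {t : ℝ} (ht : 0 < t) : IsZeroOf A (t • v) :=
  ⟨smul_ne_zero ht.ne' hv.1, fun i => mul_nonneg ht.le (hv.2.1 i), by
    simp [mulVec_smul, hv.2.2]⟩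

theorem sub_smul (hA : Copositive A) (hu : IsZeroOf A u) (hv : IsZeroOf A v) {t : ℝ}
    (ht : 0 < t) (hle : t • v ≤ u) (hne : u - t • v ≠ 0) : IsZeroOf A (u - t • v) := by
  set c := u ⬝ᵥ A *ᵥ v + v ⬝ᵥ A *ᵥ u
  have hline : ∀ s : ℝ, (u + s • v) ⬝ᵥ A *ᵥ (u + s • v) = s * c := fun s => by
    rw [dotProduct_mulVec_add_smul, hu.2.2, hv.2.2]
    ring
  have hnonneg : ∀ i, 0 ≤ (u - t • v) i := fun i => sub_nonneg.mpr (hle i)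
  have hc_nonneg : 0 ≤ c := by
    have := hA.2 (u + (1 : ℝ) • v) fun i => by simpa using add_nonneg (hu.2.1 i) (hv.2.1 i)
    rwa [hline, one_mul] at this
  have htc_nonneg : 0 ≤ -t * c := by
    rw [← hline, neg_smul, ← sub_eq_add_neg]
    exact hA.2 _ hnonneg
  refine ⟨hne, hnonneg, ?_⟩
  rw [sub_eq_add_neg, ← neg_smul, hline, le_antisymm (by nlinarith) hc_nonneg, mul_zero]

theorem exists_add_of_not_minimal (hA : Copositive A) (hu : IsZeroOf A u)
    (hmin : ¬ IsMinimalZeroOf A u) :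
    ∃ w v, IsZeroOf A w ∧ IsZeroOf A v ∧ Supp w ⊂ Supp u ∧ Supp v ⊂ Supp u ∧ u = w + v := by
  obtain ⟨v, hv, hvu⟩ := not_not.mp (not_and.mp hmin hu)
  obtain ⟨t, ht, hle, i, hvi, hui⟩ :=
    exists_smul_le_of_supp_subset hu.2.1 hv.2.1 hv.1 hvu.subset
  obtain ⟨j, hju, hjv⟩ := Set.exists_of_ssubset hvu
  have hvj : v j = 0 := not_not.mp hjv
  have hne : u - t • v ≠ 0 := fun h => hju (by simpa [hvj] using congrFun h j)
  have hwu : Supp (u - t • v) ⊂ Supp u :=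
    (Set.ssubset_iff_of_subset (supp_sub_smul_subset hvu.subset t)).mpr
      ⟨i, hvu.subset hvi, by simp [Supp, hui]⟩
  exact ⟨u - t • v, t • v, hu.sub_smul hA hv ht hle hne, hv.smul ht, hwu,
    supp_smul ht.ne' v ▸ hvu, (sub_add_cancel u _).symm⟩

theorem mem_closure_minimalZeros (hA : Copositive A) (hu : IsZeroOf A u) :
    u ∈ AddSubmonoid.closure {v | IsMinimalZeroOf A v} := by
  induction hs : Supp u using WellFoundedLT.induction generalizing u with
  | _ s ih =>
    by_cases hmin : IsMinimalZeroOf A u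
    · exact AddSubmonoid.subset_closure hmin
    obtain ⟨w, v, hw, hv, hwu, hvu, rfl⟩ := hu.exists_add_of_not_minimal hA hmin
    exact add_mem (ih _ (hs ▸ hwu) hw rfl) (ih _ (hs ▸ hvu) hv rfl)

end IsZeroOf

theorem stmt4 {n : ℕ} (A : Matrix (Fin n) (Fin n) ℝ) (hA : Copositive A)
    (u : Fin n → ℝ) (hu : IsZeroOf A u) :
    ∃ (m : ℕ) (f : Fin m → (Fin n → ℝ)),
      (∀ i, IsMinimalZeroOf A (f i)) ∧ u = ∑ i, f i := by
  obtain ⟨l, hl, rfl⟩ :=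
    AddSubmonoid.exists_list_of_mem_closure (hu.mem_closure_minimalZeros hA)
  exact ⟨l.length, fun i => l[i], fun i => hl _ (List.getElem_mem _),
    (Fin.sum_univ_getElem l).symm⟩
end

section
/- Let A be an n×n copositive matrix. Then the set of minimal zeros u of A normalized so that the sum of the entries of u equals 1 is a finite set. Equivalently, the number of equivalence classes of minimal zeros of A with respect to multiplication by a positive constant is finite. -/
open Matrix

lemma symm_dot {n : ℕ} {A : Matrix (Fin n) (Fin n) ℝ} (h : A.IsSymm) (u x : Fin n → ℝ) :
    u ⬝ᵥ A.mulVec x = x ⬝ᵥ A.mulVec u := by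
  rw [Matrix.dotProduct_mulVec, ← Matrix.mulVec_transpose, h.eq, dotProduct_comm]

lemma zero_dot {n : ℕ} {A : Matrix (Fin n) (Fin n) ℝ} (hA : Copositive A)
    {u : Fin n → ℝ} (hu : IsZeroOf A u) {x : Fin n → ℝ} (hx : ∀ i, 0 ≤ x i) :
    0 ≤ x ⬝ᵥ A.mulVec u := by
  set c := x ⬝ᵥ A.mulVec u with hc
  set d := x ⬝ᵥ A.mulVec x with hd
  have key : ∀ s : ℝ, 0 ≤ s → 0 ≤ 2*s*c + s^2*d := by
    intro s hs
    have h1 : ∀ i, 0 ≤ (u + s • x) i := fun i =>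
      add_nonneg (hu.2.1 i) (mul_nonneg hs (hx i))
    have h2 := hA.2 (u + s • x) h1
    have expand : (u + s • x) ⬝ᵥ A.mulVec (u + s • x) = 2*s*c + s^2*d := by
      simp only [mulVec_add, mulVec_smul, dotProduct_add, add_dotProduct,
        dotProduct_smul, smul_dotProduct, smul_eq_mul]
      rw [symm_dot hA.1 u x, hu.2.2, hc, hd]
      ring
    linarith [expand ▸ h2]
  by_contra hcn
  push_neg at hcn
  rcases le_or_gt d 0 with hdle | hdpos
  · have := key 1 one_pos.le
    nlinarith
  · have hsd : (-c/d) * d = -c := by field_simp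
    have := key (-c/d) (div_nonneg (by linarith) hdpos.le)
    nlinarith

lemma prop_lemma {n : ℕ} {A : Matrix (Fin n) (Fin n) ℝ} (hA : Copositive A)
    {u v : Fin n → ℝ} (hu : IsMinimalZeroOf A u) (hv : IsZeroOf A v)
    (hS : Supp u = Supp v) : ∃ t : ℝ, 0 < t ∧ u = t • v := by
  have hune : ∃ i, u i ≠ 0 := by
    by_contra h
    push_neg at h
    exact hu.1.1 (funext h)
  set S : Finset (Fin n) := Finset.univ.filter (fun i => u i ≠ 0) with hSdef
  have hSne : S.Nonempty := by
    obtain ⟨i, hi⟩ := hune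
    exact ⟨i, by simp [hSdef, hi]⟩
  have hupos : ∀ i ∈ S, 0 < u i := by
    intro i hi
    simp only [hSdef, Finset.mem_filter] at hi
    exact (hu.1.2.1 i).lt_of_ne' hi.2
  have hvpos : ∀ i ∈ S, 0 < v i := by
    intro i hi
    have : i ∈ Supp v := hS ▸ (by simpa [hSdef, Supp, Finset.mem_filter] using hi)
    exact (hv.2.1 i).lt_of_ne' this
  have hvz : ∀ i ∉ S, u i = 0 ∧ v i = 0 := by
    intro i hi
    simp only [hSdef, Finset.mem_filter, Finset.mem_univ, true_and, not_not] at hi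
    refine ⟨hi, ?_⟩
    by_contra h
    have : i ∈ Supp u := hS ▸ h
    exact this hi
  set T := S.image (fun i => u i / v i) with hT
  have hTne : T.Nonempty := hSne.image _
  set t := T.min' hTne with ht
  obtain ⟨i0, hi0S, hti0⟩ := Finset.mem_image.mp (T.min'_mem hTne)
  have ht_pos : 0 < t := by
    rw [ht, ← hti0]
    exact div_pos (hupos i0 hi0S) (hvpos i0 hi0S)
  set w := u - t • v with hw
  have hw_nonneg : ∀ i, 0 ≤ w i := by
    intro i
    by_cases hi : i ∈ S
    · have hle : t ≤ u i / v i := T.min'_le _ (Finset.mem_image_of_mem _ hi)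
      have : t * v i ≤ u i := (le_div_iff₀ (hvpos i hi)).mp hle
      simp only [hw, Pi.sub_apply, Pi.smul_apply, smul_eq_mul]
      linarith
    · obtain ⟨h1, h2⟩ := hvz i hi
      simp [hw, h1, h2]
  have hwi0 : w i0 = 0 := by
    simp only [hw, Pi.sub_apply, Pi.smul_apply, smul_eq_mul]
    rw [ht, ← hti0, div_mul_cancel₀]
    · ring
    · exact (hvpos i0 hi0S).ne'
  have hvAu : 0 ≤ v ⬝ᵥ A.mulVec u := zero_dot hA hu.1 hv.2.1
  have hexpand : w ⬝ᵥ A.mulVec w = -2 * t * (v ⬝ᵥ A.mulVec u) := by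
    simp only [hw, mulVec_sub, mulVec_smul, dotProduct_sub, sub_dotProduct,
      dotProduct_smul, smul_dotProduct, smul_eq_mul]
    rw [symm_dot hA.1 u v, hu.1.2.2, hv.2.2]
    ring
  have hwq0 : w ⬝ᵥ A.mulVec w = 0 := by
    have h1 := hA.2 w hw_nonneg
    nlinarith
  have hw0 : w = 0 := by
    by_contra hwne
    apply hu.2
    refine ⟨w, ⟨hwne, hw_nonneg, hwq0⟩, ?_⟩
    constructor
    · intro i hi
      by_contra hiu
      have : u i = 0 := not_not.mp (fun h => hiu h)
      have hvi : v i = 0 := by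
        by_contra h
        exact hiu (hS ▸ (h : i ∈ Supp v) : i ∈ Supp u)
      exact hi (by simp [hw, this, hvi])
    · intro hsub
      have : i0 ∈ Supp u := by
        simp only [hSdef, Finset.mem_filter] at hi0S
        exact hi0S.2
      exact (hsub this) hwi0
  refine ⟨t, ht_pos, ?_⟩
  funext i
  have := congrFun hw0 i
  simp only [hw, Pi.sub_apply, Pi.smul_apply, smul_eq_mul, Pi.zero_apply] at this ⊢
  linarith

theorem stmt6 {n : ℕ} (A : Matrix (Fin n) (Fin n) ℝ) (hA : Copositive A) :
    {u : Fin n → ℝ | IsMinimalZeroOf A u ∧ ∑ i, u i = 1}.Finite := by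
  set s := {u : Fin n → ℝ | IsMinimalZeroOf A u ∧ ∑ i, u i = 1} with hs
  set f : (Fin n → ℝ) → Finset (Fin n) := fun u => Finset.univ.filter (fun i => u i ≠ 0) with hf
  have hinj : Set.InjOn f s := by
    intro u hus v hvs hfe
    have hSupp : Supp u = Supp v := by
      ext i
      have : (i ∈ f u) = (i ∈ f v) := by rw [hfe]
      simpa [hf, Finset.mem_filter, Supp] using this
    obtain ⟨t, htpos, htuv⟩ := prop_lemma hA hus.1 hvs.1.1 hSupp
    have hsum : ∑ i, u i = t * ∑ i, v i := by
      rw [htuv, Finset.mul_sum]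
      simp
    rw [hus.2, hvs.2, mul_one] at hsum
    have ht1 : t = 1 := hsum.symm
    rw [htuv, ht1, one_smul]
  exact Set.Finite.of_finite_image (Set.toFinite _) hinj
end

section
/- Let A be an n×n copositive matrix and let I ⊆ {1,…,n} be a nonempty index set. Then the following are equivalent: (a) A has a minimal zero with support I; (b) the principal submatrix A_I is positive semi-definite, its kernel is one-dimensional, and the kernel of A_I is spanned by a vector all of whose entries are positive. -/
open Matrix

/-!
A zero `u` of a copositive matrix `A` minimises `xᵀ A x` on the nonnegative orthant, so `A u ≥ 0`,
with equality on `Supp u`. Moving `u` in a direction `v` supported in `I ⊆ Supp u` keeps it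
nonnegative for small steps while `(u + t v)ᵀ A (u + t v) = t² vᵀ A v`, so `A_I` is positive
semidefinite. For positive semidefinite `A_I`, the zeros of `A` supported in `I` are the extensions
by zero of the nonzero nonnegative vectors of `ker A_I`. Finally, a positive `z ∈ ker A_I` spans the
kernel iff every nonzero nonnegative kernel vector is positive: for `x` in the kernel, subtracting
the largest multiple of `z` that keeps `x` nonnegative leaves a nonnegative kernel vector with a
zero entry. This last condition is exactly minimality of the zero extending `z`.
-/

open Filter Topology

lemma nonneg_of_forall_pos_nonneg_add_mul_s7 {a b : ℝ} (h : ∀ t > 0, 0 ≤ a + t * b) : 0 ≤ a := by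
  have hlim : Tendsto (fun t => a + t * b) (𝓝[>] 0) (𝓝 a) := by
    refine ((continuous_const.add (continuous_id.mul continuous_const)).tendsto' 0 a ?_).mono_left
      nhdsWithin_le_nhds
    simp
  exact ge_of_tendsto hlim (eventually_nhdsWithin_of_forall h)

lemma exists_pos_forall_nonneg_add_mul {ι : Type*} [Finite ι] {u v : ι → ℝ}
    (hu : ∀ i, 0 ≤ u i) (hv : ∀ i, u i = 0 → v i = 0) : ∃ t > 0, ∀ i, 0 ≤ u i + t * v i := by
  have hnhds : ∀ᶠ t in 𝓝 (0 : ℝ), ∀ i, 0 ≤ u i + t * v i := by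
    refine eventually_all.2 fun i => ?_
    rcases (hu i).eq_or_lt with hui | hui
    · exact Eventually.of_forall fun t => by simp [← hui, hv i hui.symm]
    · have hlim : Tendsto (fun t => u i + t * v i) (𝓝 0) (𝓝 (u i)) :=
        (continuous_const.add (continuous_id.mul continuous_const)).tendsto' 0 (u i) (by simp)
      exact (hlim.eventually (lt_mem_nhds hui)).mono fun t ht => ht.le
  have hpos : ∀ᶠ t in 𝓝[>] (0 : ℝ), 0 < t := self_mem_nhdsWithin
  exact (hpos.and (eventually_nhdsWithin_of_eventually_nhds hnhds)).exists

lemma exists_nonneg_sub_smul_apply_eq_zero {ι : Type*} [Finite ι] [Nonempty ι] {z : ι → ℝ}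
    (hz : ∀ i, 0 < z i) (x : ι → ℝ) :
    ∃ c : ℝ, (∀ i, 0 ≤ (x - c • z) i) ∧ ∃ j, (x - c • z) j = 0 := by
  obtain ⟨j, hj⟩ := Finite.exists_min fun i => x i / z i
  refine ⟨x j / z j, fun i => ?_, j, ?_⟩
  · have := (le_div_iff₀ (hz i)).1 (hj i)
    simp only [Pi.sub_apply, Pi.smul_apply, smul_eq_mul]
    linarith
  · simp [div_mul_cancel₀ _ (hz j).ne']

lemma Submodule.eq_span_singleton_iff_of_pos {ι : Type*} [Finite ι] {S : Submodule ℝ (ι → ℝ)}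
    {z : ι → ℝ} (hz : ∀ i, 0 < z i) (hzS : z ∈ S) :
    S = ℝ ∙ z ↔ ∀ y ∈ S, (∀ i, 0 ≤ y i) → y ≠ 0 → ∀ i, y i ≠ 0 := by
  constructor
  · rintro rfl y hyS - hy i
    obtain ⟨c, rfl⟩ := mem_span_singleton.1 hyS
    have hc : c ≠ 0 := by rintro rfl; exact hy (zero_smul ℝ z)
    simpa using mul_ne_zero hc (hz i).ne'
  · intro h
    refine le_antisymm (fun x hx => ?_) ((span_singleton_le_iff_mem z S).2 hzS)
    rcases isEmpty_or_nonempty ι with _ | _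
    · exact Subsingleton.elim x 0 ▸ zero_mem _
    obtain ⟨c, hnonneg, j, hj⟩ := exists_nonneg_sub_smul_apply_eq_zero hz x
    have hxc : x - c • z = 0 := by
      by_contra hne
      exact h _ (sub_mem hx (smul_mem S c hzS)) hnonneg hne j hj
    rw [sub_eq_zero.1 hxc]
    exact smul_mem _ c (mem_span_singleton_self z)

lemma Matrix.ker_mulVecLin_eq_span_singleton_iff {ι : Type*} [Fintype ι] (M : Matrix ι ι ℝ)
    (z : ι → ℝ) : LinearMap.ker M.mulVecLin = ℝ ∙ z ↔ ∀ x, M *ᵥ x = 0 ↔ ∃ c : ℝ, x = c • z := by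
  simp only [SetLike.ext_iff, LinearMap.mem_ker, mulVecLin_apply, Submodule.mem_span_singleton]
  exact forall_congr' fun x => iff_congr Iff.rfl (exists_congr fun c => eq_comm)

lemma Matrix.IsSymm.add_smul_dotProduct_mulVec_add_smul {ι : Type*} [Fintype ι]
    {A : Matrix ι ι ℝ} (hA : A.IsSymm) (u w : ι → ℝ) (t : ℝ) :
    (u + t • w) ⬝ᵥ A *ᵥ (u + t • w)
      = u ⬝ᵥ A *ᵥ u + 2 * t * (w ⬝ᵥ A *ᵥ u) + t ^ 2 * (w ⬝ᵥ A *ᵥ w) := by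
  have hcross : u ⬝ᵥ A *ᵥ w = w ⬝ᵥ A *ᵥ u := by
    rw [dotProduct_mulVec, ← mulVec_transpose, hA.eq, dotProduct_comm]
  simp only [mulVec_add, mulVec_smul, dotProduct_add, add_dotProduct, dotProduct_smul,
    smul_dotProduct, smul_eq_mul, hcross]
  ring

section Restriction

variable {n : ℕ} {I : Finset (Fin n)}

def extVec (I : Finset (Fin n)) (y : {i // i ∈ I} → ℝ) : Fin n → ℝ :=
  fun i => if h : i ∈ I then y ⟨i, h⟩ else 0

lemma extVec_of_mem (y : {i // i ∈ I} → ℝ) {i : Fin n} (hi : i ∈ I) :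
    extVec I y i = y ⟨i, hi⟩ := dif_pos hi

lemma extVec_of_notMem (y : {i // i ∈ I} → ℝ) {i : Fin n} (hi : i ∉ I) :
    extVec I y i = 0 := dif_neg hi

lemma subVec_extVec (y : {i // i ∈ I} → ℝ) : subVec (extVec I y) I = y :=
  funext fun i => extVec_of_mem y i.2

lemma extVec_subVec {u : Fin n → ℝ} (hu : Supp u ⊆ I) : extVec I (subVec u I) = u := by
  funext i
  by_cases hi : i ∈ I
  · exact extVec_of_mem _ hi
  · rw [extVec_of_notMem _ hi]
    exact (not_not.1 fun h => hi (hu h)).symm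

lemma mem_supp_extVec {y : {i // i ∈ I} → ℝ} {i : Fin n} :
    i ∈ Supp (extVec I y) ↔ ∃ hi : i ∈ I, y ⟨i, hi⟩ ≠ 0 := by
  by_cases hi : i ∈ I
  · simp [Supp, extVec_of_mem y hi, hi]
  · simp [Supp, extVec_of_notMem y hi, hi]

lemma supp_extVec_of_pos {y : {i // i ∈ I} → ℝ} (hy : ∀ i, 0 < y i) :
    Supp (extVec I y) = I :=
  Set.ext fun _ => mem_supp_extVec.trans ⟨fun ⟨hi, _⟩ => hi, fun hi => ⟨hi, (hy _).ne'⟩⟩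

lemma extVec_dotProduct (y : {i // i ∈ I} → ℝ) (w : Fin n → ℝ) :
    extVec I y ⬝ᵥ w = y ⬝ᵥ subVec w I := by
  simp only [dotProduct]
  rw [← Finset.sum_subset (Finset.subset_univ I) fun i _ hi => by
      rw [extVec_of_notMem y hi, zero_mul], ← Finset.sum_coe_sort I]
  exact Finset.sum_congr rfl fun i _ => by rw [extVec_of_mem y i.2]; rfl

lemma subVec_mulVec_extVec (A : Matrix (Fin n) (Fin n) ℝ) (y : {i // i ∈ I} → ℝ) :
    subVec (A *ᵥ extVec I y) I = subMat A I *ᵥ y := by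
  funext i
  rw [subVec, mulVec, dotProduct_comm, extVec_dotProduct, dotProduct_comm]
  rfl

lemma extVec_dotProduct_mulVec_extVec (A : Matrix (Fin n) (Fin n) ℝ) (y : {i // i ∈ I} → ℝ) :
    extVec I y ⬝ᵥ A *ᵥ extVec I y = y ⬝ᵥ subMat A I *ᵥ y := by
  rw [extVec_dotProduct, subVec_mulVec_extVec]

end Restriction

namespace Copositive

variable {n : ℕ} {A : Matrix (Fin n) (Fin n) ℝ} {I : Finset (Fin n)} {u : Fin n → ℝ}

lemma mulVec_nonneg (hA : Copositive A) (hu : IsZeroOf A u) (i : Fin n) : 0 ≤ (A *ᵥ u) i := by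
  have hslope : ∀ t > 0, 0 ≤ 2 * (A *ᵥ u) i + t * A i i := by
    intro t ht
    have hnonneg : ∀ j, 0 ≤ (u + t • (Pi.single i 1 : Fin n → ℝ)) j := by
      intro j
      rcases eq_or_ne j i with rfl | hji
      · simpa using add_nonneg (hu.2.1 j) ht.le
      · simpa [hji] using hu.2.1 j
    have hq := hA.2 _ hnonneg
    rw [hA.1.add_smul_dotProduct_mulVec_add_smul, hu.2.2] at hq
    simp only [single_dotProduct, mulVec_single_one, col_apply, one_mul] at hq
    exact nonneg_of_mul_nonneg_right (by linarith) ht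
  linarith [nonneg_of_forall_pos_nonneg_add_mul_s7 hslope]

lemma mulVec_eq_zero (hA : Copositive A) (hu : IsZeroOf A u) {i : Fin n} (hi : i ∈ Supp u) :
    (A *ᵥ u) i = 0 := by
  have hterms : ∀ j ∈ Finset.univ, 0 ≤ u j * (A *ᵥ u) j := fun j _ =>
    mul_nonneg (hu.2.1 j) (hA.mulVec_nonneg hu j)
  have hterm := (Finset.sum_eq_zero_iff_of_nonneg hterms).1 hu.2.2 i (Finset.mem_univ i)
  exact (mul_eq_zero.1 hterm).resolve_left hi

lemma posSemidef_subMat (hA : Copositive A) (hu : IsZeroOf A u) (hI : (I : Set (Fin n)) ⊆ Supp u) :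
    (subMat A I).PosSemidef := by
  refine .of_dotProduct_mulVec_nonneg (isHermitian_iff_isSymm.2 (hA.1.submatrix _)) fun x => ?_
  rw [star_trivial, ← extVec_dotProduct_mulVec_extVec]
  obtain ⟨t, ht, hnonneg⟩ := exists_pos_forall_nonneg_add_mul (v := extVec I x) hu.2.1
    fun i hi => extVec_of_notMem x fun hiI => hI hiI hi
  have hcross : extVec I x ⬝ᵥ A *ᵥ u = 0 := by
    have hAu : subVec (A *ᵥ u) I = 0 := funext fun i => hA.mulVec_eq_zero hu (hI i.2)
    rw [extVec_dotProduct, hAu, dotProduct_zero]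
  have hq := hA.2 (u + t • extVec I x) (by simpa using hnonneg)
  rw [hA.1.add_smul_dotProduct_mulVec_add_smul, hu.2.2, hcross] at hq
  exact nonneg_of_mul_nonneg_right (by linarith) (pow_pos ht 2)

end Copositive

section Kernel

variable {n : ℕ} {A : Matrix (Fin n) (Fin n) ℝ} {I : Finset (Fin n)}

lemma isZeroOf_extVec_iff (hA : (subMat A I).PosSemidef) {y : {i // i ∈ I} → ℝ}
    (hy : ∀ i, 0 ≤ y i) :
    IsZeroOf A (extVec I y) ↔ y ≠ 0 ∧ y ∈ LinearMap.ker (subMat A I).mulVecLin := by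
  have hne : extVec I y ≠ 0 ↔ y ≠ 0 := by
    refine not_congr ⟨fun h => by rw [← subVec_extVec y, h]; rfl, fun h => funext fun i => ?_⟩
    by_cases hi : i ∈ I <;> simp [extVec, hi, h]
  have hnonneg : ∀ i, 0 ≤ extVec I y i := fun i => by
    by_cases hi : i ∈ I
    · exact extVec_of_mem y hi ▸ hy _
    · exact (extVec_of_notMem y hi).ge
  rw [IsZeroOf, hne, extVec_dotProduct_mulVec_extVec, LinearMap.mem_ker, mulVecLin_apply,
    ← hA.dotProduct_mulVec_zero_iff, star_trivial]
  exact and_congr_right' (and_iff_right hnonneg)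

lemma isMinimalZeroOf_extVec_iff (hA : (subMat A I).PosSemidef) {z : {i // i ∈ I} → ℝ}
    (hz : ∀ i, 0 < z i) (hI : I.Nonempty) :
    IsMinimalZeroOf A (extVec I z) ↔ LinearMap.ker (subMat A I).mulVecLin = ℝ ∙ z := by
  have hzne : z ≠ 0 := by
    obtain ⟨i, hi⟩ := hI
    exact fun h => (hz ⟨i, hi⟩).ne' (congrFun h _)
  rw [IsMinimalZeroOf, isZeroOf_extVec_iff hA fun i => (hz i).le, supp_extVec_of_pos hz,
    and_iff_right hzne]
  constructor
  · rintro ⟨hzker, hmin⟩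
    refine (Submodule.eq_span_singleton_iff_of_pos hz hzker).2 fun y hyker hy hne i hi => ?_
    refine hmin ⟨extVec I y, (isZeroOf_extVec_iff hA hy).2 ⟨hne, hyker⟩, ?_⟩
    exact ⟨fun j hj => (mem_supp_extVec.1 hj).1, fun hsub => (mem_supp_extVec.1 (hsub i.2)).2 hi⟩
  · intro hker
    have hzker : z ∈ LinearMap.ker (subMat A I).mulVecLin :=
      hker ▸ Submodule.mem_span_singleton_self z
    refine ⟨hzker, fun ⟨v, hv, hvI⟩ => hvI.not_subset fun i hi => ?_⟩
    have hvnonneg : ∀ i, 0 ≤ subVec v I i := fun i => hv.2.1 i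
    rw [← extVec_subVec hvI.subset, isZeroOf_extVec_iff hA hvnonneg] at hv
    exact (Submodule.eq_span_singleton_iff_of_pos hz hzker).1 hker _ hv.2 hvnonneg hv.1 ⟨i, hi⟩

end Kernel

theorem stmt7 {n : ℕ} (A : Matrix (Fin n) (Fin n) ℝ) (hA : Copositive A)
    (I : Finset (Fin n)) (hIne : I.Nonempty) :
    (∃ u, IsMinimalZeroOf A u ∧ Supp u = (I : Set (Fin n))) ↔
      ((subMat A I).PosSemidef ∧ ∃ z : {i // i ∈ I} → ℝ, (∀ i, 0 < z i) ∧
        ∀ x : {i // i ∈ I} → ℝ, (subMat A I).mulVec x = 0 ↔ ∃ c : ℝ, x = c • z) := by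
  constructor
  · rintro ⟨u, hu, hsupp⟩
    have hz : ∀ i, 0 < subVec u I i := fun i =>
      (hu.1.2.1 i).lt_of_ne' (show i.1 ∈ Supp u from hsupp ▸ i.2)
    have hPSD := hA.posSemidef_subMat hu.1 hsupp.symm.subset
    rw [← extVec_subVec hsupp.subset, isMinimalZeroOf_extVec_iff hPSD hz hIne,
      ker_mulVecLin_eq_span_singleton_iff] at hu
    exact ⟨hPSD, _, hz, hu⟩
  · rintro ⟨hPSD, z, hz, hker⟩
    rw [← ker_mulVecLin_eq_span_singleton_iff, ← isMinimalZeroOf_extVec_iff hPSD hz hIne] at hker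
    exact ⟨extVec I z, hker, supp_extVec_of_pos hz⟩
end

section
/- Let A be an n×n copositive matrix and let I ⊆ {1,…,n} be an index set such that the principal submatrix A_I is positive definite. Let u be a zero of A such that Supp(u) \ I = {k} consists of exactly one element, and normalize u so that u_k = 1. Then A_{kk} = u_I^T A_I u_I, and u is a minimal zero of A. -/
/-!
At a zero `u` of a copositive matrix `A`, the quadratic form is minimal over the nonnegative
orthant, so `(A u)ᵢ ≥ 0` for all `i`, with equality on `Supp u`. Consequently
`(u + x)ᵀ A (u + x) = xᵀ A x` whenever `Supp x ⊆ Supp u`. With `x = -u_I` (and `u_k = 1`) this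
reads `A_kk = u_Iᵀ A_I u_I`. If `w` is a zero with `Supp w ⊊ Supp u`, then either `w_k = 0`, or
`u - (u_k / w_k) w` is supported in `I` and annihilates the quadratic form. Positive
definiteness of `A_I` forces `w = 0`, respectively `u = (u_k / w_k) w`; both are impossible.
-/

open Matrix

open Filter Topology

lemma nonneg_of_forall_mem_Ioo_nonneg_add_mul {c a δ : ℝ} (hδ : 0 < δ)
    (h : ∀ t ∈ Set.Ioo 0 δ, 0 ≤ c + t * a) : 0 ≤ c := by
  have hlim : Tendsto (fun t : ℝ => c + t * a) (𝓝[>] 0) (𝓝 c) :=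
    ((by fun_prop : Continuous fun t : ℝ => c + t * a).tendsto' 0 c (by simp)).mono_left
      nhdsWithin_le_nhds
  exact ge_of_tendsto hlim (eventually_of_mem (Ioo_mem_nhdsGT hδ) h)

variable {n : ℕ} {A : Matrix (Fin n) (Fin n) ℝ} {u x : Fin n → ℝ} {I : Finset (Fin n)}
  {k : Fin n}

lemma supp_add_subset (x y : Fin n → ℝ) : Supp (x + y) ⊆ Supp x ∪ Supp y := fun i hi => by
  by_contra h
  simp_all [Supp]

lemma supp_smul_subset (c : ℝ) (x : Fin n → ℝ) : Supp (c • x) ⊆ Supp x := fun i hi h =>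
  hi (by simp [h])

lemma Matrix.IsSymm.dotProduct_mulVec_add (hA : A.IsSymm) (x y : Fin n → ℝ) :
    (x + y) ⬝ᵥ A *ᵥ (x + y) = x ⬝ᵥ A *ᵥ x + 2 * (y ⬝ᵥ A *ᵥ x) + y ⬝ᵥ A *ᵥ y := by
  have hsymm : x ⬝ᵥ A *ᵥ y = y ⬝ᵥ A *ᵥ x := by
    rw [dotProduct_mulVec, ← mulVec_transpose, hA.eq, dotProduct_comm]
  simp only [mulVec_add, dotProduct_add, add_dotProduct, hsymm]
  ring

lemma Matrix.IsSymm.dotProduct_mulVec_add_single (hA : A.IsSymm) (u : Fin n → ℝ) (i : Fin n)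
    (t : ℝ) : (u + Pi.single i t) ⬝ᵥ A *ᵥ (u + Pi.single i t) =
      u ⬝ᵥ A *ᵥ u + t * (2 * (A *ᵥ u) i + t * A i i) := by
  rw [hA.dotProduct_mulVec_add]
  simp only [single_dotProduct, mulVec_single, Pi.smul_apply, op_smul_eq_mul, col_apply]
  ring

lemma apply_eq_zero_of_supp_subset (hx : Supp x ⊆ I) {i : Fin n} (hi : i ∉ I) : x i = 0 :=
  not_not.mp fun h => hi (hx h)

lemma subVec_dotProduct_subMat_mulVec (A : Matrix (Fin n) (Fin n) ℝ) (hx : Supp x ⊆ I) :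
    subVec x I ⬝ᵥ subMat A I *ᵥ subVec x I = x ⬝ᵥ A *ᵥ x := by
  have hsum (f : Fin n → ℝ) : ∑ i : I, x i * f i = ∑ i, x i * f i :=
    (Finset.sum_coe_sort I fun i => x i * f i).trans <|
      Finset.sum_subset (Finset.subset_univ I) fun i _ hi => by
        simp [apply_eq_zero_of_supp_subset hx hi]
  simp only [dotProduct, mulVec, subMat, subVec, submatrix_apply, mul_comm (A _ _), hsum]
  exact hsum fun i => ∑ j, x j * A i j

lemma eq_zero_of_subMat_posDef (hI : (subMat A I).PosDef) (hx : Supp x ⊆ I)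
    (hq : x ⬝ᵥ A *ᵥ x = 0) : x = 0 := by
  by_contra hx0
  have hsub : subVec x I ≠ 0 := fun h => hx0 <| funext fun i =>
    if hi : i ∈ I then congrFun h ⟨i, hi⟩ else apply_eq_zero_of_supp_subset hx hi
  have := hI.dotProduct_mulVec_pos hsub
  rw [star_trivial, subVec_dotProduct_subMat_mulVec A hx, hq] at this
  exact this.false

namespace IsZeroOf

lemma mul_two_mulVec_add_nonneg (hA : Copositive A) (hu : IsZeroOf A u) (i : Fin n) {t : ℝ}
    (ht : 0 ≤ u i + t) : 0 ≤ t * (2 * (A *ᵥ u) i + t * A i i) := by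
  have hnonneg : ∀ j, 0 ≤ (u + Pi.single i t : Fin n → ℝ) j := by
    intro j
    rcases eq_or_ne j i with rfl | hj
    · simpa using ht
    · simpa [Pi.single_eq_of_ne hj] using hu.2.1 j
  simpa [hA.1.dotProduct_mulVec_add_single, hu.2.2] using hA.2 _ hnonneg

lemma mulVec_nonneg (hA : Copositive A) (hu : IsZeroOf A u) (i : Fin n) :
    0 ≤ (A *ᵥ u) i := by
  have h : 0 ≤ 2 * (A *ᵥ u) i :=
    nonneg_of_forall_mem_Ioo_nonneg_add_mul (a := A i i) one_pos fun t ht =>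
      nonneg_of_mul_nonneg_right
        (hu.mul_two_mulVec_add_nonneg hA i (t := t) (by linarith [hu.2.1 i, ht.1])) ht.1
  linarith

lemma mulVec_eq_zero (hA : Copositive A) (hu : IsZeroOf A u) {i : Fin n} (hi : i ∈ Supp u) :
    (A *ᵥ u) i = 0 := by
  have hui : 0 < u i := (hu.2.1 i).lt_of_ne' hi
  have h : 0 ≤ -2 * (A *ᵥ u) i :=
    nonneg_of_forall_mem_Ioo_nonneg_add_mul (a := A i i) hui fun t ht =>
      have := hu.mul_two_mulVec_add_nonneg hA i (t := -t) (by linarith [ht.2])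
      nonneg_of_mul_nonneg_right (by linarith) ht.1
  linarith [hu.mulVec_nonneg hA i]

lemma dotProduct_mulVec_eq_zero (hA : Copositive A) (hu : IsZeroOf A u) (hx : Supp x ⊆ Supp u) :
    x ⬝ᵥ A *ᵥ u = 0 := by
  refine Finset.sum_eq_zero fun i _ => ?_
  by_cases hxi : x i = 0
  · simp [hxi]
  · simp [hu.mulVec_eq_zero hA (hx hxi)]

lemma dotProduct_mulVec_add (hA : Copositive A) (hu : IsZeroOf A u) (hx : Supp x ⊆ Supp u) :
    (u + x) ⬝ᵥ A *ᵥ (u + x) = x ⬝ᵥ A *ᵥ x := by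
  rw [hA.1.dotProduct_mulVec_add, hu.2.2, hu.dotProduct_mulVec_eq_zero hA hx]
  ring

lemma diag_eq_of_supp_diff_eq_singleton (hA : Copositive A) (hu : IsZeroOf A u)
    (hk : Supp u \ I = {k}) (huk : u k = 1) :
    A k k = subVec u I ⬝ᵥ subMat A I *ᵥ subVec u I := by
  set v := (I : Set (Fin n)).indicator u
  have hvI : Supp v ⊆ I := fun i hi => by_contra fun h => hi (Set.indicator_of_notMem h u)
  have hvu : Supp ((-1 : ℝ) • v) ⊆ Supp u :=
    (supp_smul_subset _ _).trans fun i hi h => hi (by simp [v, Set.indicator, h])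
  have hkI : k ∉ I := (hk.symm.subset rfl).2
  have hsingle : u + (-1 : ℝ) • v = Pi.single k 1 := by
    funext i
    by_cases hi : i ∈ I
    · simp [v, hi, ne_of_mem_of_not_mem hi hkI]
    · rcases eq_or_ne i k with rfl | hik
      · simp [v, hi, huk]
      · have hui : u i = 0 := not_not.mp fun h => hik (hk.subset ⟨h, hi⟩)
        simp [v, hi, hik, hui]
  have hsubVec : subVec v I = subVec u I := funext fun i => Set.indicator_of_mem i.2 u
  calc A k k = (u + (-1 : ℝ) • v) ⬝ᵥ A *ᵥ (u + (-1 : ℝ) • v) := by rw [hsingle]; simp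
    _ = v ⬝ᵥ A *ᵥ v := by rw [hu.dotProduct_mulVec_add hA hvu]; simp [mulVec_neg]
    _ = subVec u I ⬝ᵥ subMat A I *ᵥ subVec u I := by
      rw [← hsubVec, subVec_dotProduct_subMat_mulVec A hvI]

lemma isMinimalZeroOf_of_supp_diff_eq_singleton (hA : Copositive A)
    (hI : (subMat A I).PosDef) (hu : IsZeroOf A u) (hk : Supp u \ I = {k}) :
    IsMinimalZeroOf A u := by
  have hsupp : Supp u ⊆ I ∪ {k} := Set.sdiff_subset_iff.mp hk.subset
  refine ⟨hu, fun ⟨w, hw, hwu⟩ => ?_⟩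
  by_cases hwk : w k = 0
  · have hwI : Supp w ⊆ I := fun i hi =>
      (hsupp (hwu.1 hi)).resolve_right fun h => hi (Set.mem_singleton_iff.mp h ▸ hwk)
    exact hw.1 (eq_zero_of_subMat_posDef hI hwI hw.2.2)
  set c := u k / w k
  have hx : Supp (-c • w) ⊆ Supp u := (supp_smul_subset _ _).trans hwu.1
  have hq : (u + -c • w) ⬝ᵥ A *ᵥ (u + -c • w) = 0 := by
    rw [hu.dotProduct_mulVec_add hA hx]
    simp [mulVec_neg, mulVec_smul, hw.2.2]
  have hI' : Supp (u + -c • w) ⊆ I := fun i hi =>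
    (hsupp (Set.union_subset subset_rfl hx (supp_add_subset _ _ hi))).resolve_right fun h =>
      hi <| by simp [Set.mem_singleton_iff.mp h, c, hwk]
  have huw : u = c • w := by
    simpa [add_neg_eq_zero] using eq_zero_of_subMat_posDef hI hI' hq
  exact hwu.2 (huw ▸ supp_smul_subset c w)

end IsZeroOf

theorem stmt9 {n : ℕ} (A : Matrix (Fin n) (Fin n) ℝ) (hA : Copositive A)
    (I : Finset (Fin n)) (hI : (subMat A I).PosDef)
    (u : Fin n → ℝ) (hu : IsZeroOf A u)
    (k : Fin n) (hk : Supp u \ (I : Set (Fin n)) = {k}) (huk : u k = 1) :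
    A k k = subVec u I ⬝ᵥ (subMat A I).mulVec (subVec u I) ∧ IsMinimalZeroOf A u :=
  ⟨hu.diag_eq_of_supp_diff_eq_singleton hA hk huk,
    hu.isMinimalZeroOf_of_supp_diff_eq_singleton hA hI hk⟩
end

section
/- Let A be an n×n copositive matrix and let I ⊆ {1,…,n} be an index set such that the principal submatrix A_I is positive definite. Let u, v be zeros of A such that Supp(u) \ I = {k} and Supp(v) \ I = {l} for some indices k, l, normalized so that u_k = v_l = 1. Then (Au)_l = A_{kl} + ∑_{j∈I} u_j (Av)_j − v_I^T A_I u_I. Moreover, if u ≠ v, then k ≠ l. -/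
open Matrix

/-!
Write `u = e_k + u'` and `v = e_l + v'` with `u', v'` supported on `I`. Expanding `(Au)_l` and
`∑_{j ∈ I} u_j (Av)_j` along this decomposition and using the symmetry of `A` gives the identity.
If `k = l`, then `u - v` is supported on `I`, and the parallelogram identity together with
`uᵀAu = vᵀAv = 0` gives `(u - v)ᵀA(u - v) = -(u + v)ᵀA(u + v) ≤ 0` by copositivity; positive
definiteness of `A_I` then forces `u = v`.
-/

lemma dotProduct_mulVec_sub_add_dotProduct_mulVec_add {ι R : Type*} [Fintype ι] [CommRing R]
    (A : Matrix ι ι R) (u v : ι → R) :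
    (u - v) ⬝ᵥ A.mulVec (u - v) + (u + v) ⬝ᵥ A.mulVec (u + v)
      = 2 * (u ⬝ᵥ A.mulVec u + v ⬝ᵥ A.mulVec v) := by
  simp only [mulVec_sub, mulVec_add, dotProduct_sub, sub_dotProduct, dotProduct_add,
    add_dotProduct]
  ring

section

variable {n : ℕ}

lemma notMem_and_eq_zero_of_supp_sdiff_eq_singleton {u : Fin n → ℝ} {I : Finset (Fin n)}
    {k : Fin n} (h : Supp u \ (I : Set (Fin n)) = {k}) :
    k ∉ I ∧ ∀ i, i ∉ I → i ≠ k → u i = 0 := by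
  have hk : k ∈ Supp u \ (I : Set (Fin n)) := h ▸ rfl
  refine ⟨hk.2, fun i hiI hik => ?_⟩
  by_contra hne
  have : i ∈ Supp u \ (I : Set (Fin n)) := ⟨hne, hiI⟩
  rw [h] at this
  exact hik this

lemma sum_mul_eq_add_sum_of_supp_sdiff_eq_singleton {u : Fin n → ℝ} {I : Finset (Fin n)}
    {k : Fin n} (h : Supp u \ (I : Set (Fin n)) = {k}) (f : Fin n → ℝ) :
    ∑ j, f j * u j = f k * u k + ∑ j ∈ I, f j * u j := by
  obtain ⟨hkI, hu0⟩ := notMem_and_eq_zero_of_supp_sdiff_eq_singleton h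
  rw [← Finset.sum_insert hkI (f := fun j => f j * u j)]
  refine (Finset.sum_subset (Finset.subset_univ _) fun j _ hj => ?_).symm
  rw [Finset.mem_insert, not_or] at hj
  rw [hu0 j hj.2 hj.1, mul_zero]

lemma subVec_dotProduct_subMat_mulVec_s10 (A : Matrix (Fin n) (Fin n) ℝ) (I : Finset (Fin n))
    (w z : Fin n → ℝ) :
    subVec w I ⬝ᵥ (subMat A I).mulVec (subVec z I) = ∑ i ∈ I, ∑ j ∈ I, w i * A i j * z j := by
  simp only [dotProduct, mulVec, subMat, subVec, submatrix_apply, Finset.mul_sum, mul_assoc]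
  rw [← Finset.sum_coe_sort I]
  exact Finset.sum_congr rfl fun i _ =>
    Finset.sum_coe_sort I fun j => w i * (A i j * z j)

lemma subVec_dotProduct_subMat_mulVec_self_of_forall_notMem (A : Matrix (Fin n) (Fin n) ℝ)
    {I : Finset (Fin n)} {w : Fin n → ℝ} (hw : ∀ i, i ∉ I → w i = 0) :
    subVec w I ⬝ᵥ (subMat A I).mulVec (subVec w I) = w ⬝ᵥ A.mulVec w := by
  rw [subVec_dotProduct_subMat_mulVec_s10]
  simp only [dotProduct, mulVec, Finset.mul_sum, ← mul_assoc]
  rw [← Finset.sum_subset (Finset.subset_univ I) fun i _ hi => by simp [hw i hi]]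
  refine Finset.sum_congr rfl fun i _ => Finset.sum_subset (Finset.subset_univ I) ?_
  intro j _ hj
  rw [hw j hj, mul_zero]


lemma mulVec_apply_eq_of_supp_sdiff_eq_singleton {A : Matrix (Fin n) (Fin n) ℝ}
    (hA : A.IsSymm) {I : Finset (Fin n)} {u v : Fin n → ℝ} {k l : Fin n}
    (hk : Supp u \ (I : Set (Fin n)) = {k}) (hl : Supp v \ (I : Set (Fin n)) = {l})
    (huk : u k = 1) (hvl : v l = 1) :
    A.mulVec u l = A k l + (∑ j ∈ I, u j * A.mulVec v j)
      - subVec v I ⬝ᵥ (subMat A I).mulVec (subVec u I) := by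
  have hcross : ∑ i ∈ I, ∑ j ∈ I, v i * A i j * u j
      = ∑ j ∈ I, u j * ∑ i ∈ I, A j i * v i := by
    rw [Finset.sum_comm]
    refine Finset.sum_congr rfl fun j _ => ?_
    rw [Finset.mul_sum]
    refine Finset.sum_congr rfl fun i _ => ?_
    rw [hA.apply j i]
    ring
  have hrow : ∑ j ∈ I, A l j * u j = ∑ j ∈ I, u j * A j l :=
    Finset.sum_congr rfl fun j _ => by rw [hA.apply j l, mul_comm]
  rw [subVec_dotProduct_subMat_mulVec_s10, hcross]
  simp only [mulVec, dotProduct]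
  rw [sum_mul_eq_add_sum_of_supp_sdiff_eq_singleton hk, huk, hrow, hA.apply k l]
  simp only [sum_mul_eq_add_sum_of_supp_sdiff_eq_singleton hl, hvl, mul_one, mul_add,
    Finset.sum_add_distrib]
  ring

lemma IsZeroOf.eq_of_forall_notMem_eq {A : Matrix (Fin n) (Fin n) ℝ} (hA : Copositive A)
    {I : Finset (Fin n)} (hI : (subMat A I).PosDef) {u v : Fin n → ℝ} (hu : IsZeroOf A u)
    (hv : IsZeroOf A v) (h : ∀ i, i ∉ I → u i = v i) : u = v := by
  have hsum : 0 ≤ (u + v) ⬝ᵥ A.mulVec (u + v) :=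
    hA.2 _ fun i => add_nonneg (hu.2.1 i) (hv.2.1 i)
  have hdiff : (u - v) ⬝ᵥ A.mulVec (u - v) ≤ 0 := by
    linarith [dotProduct_mulVec_sub_add_dotProduct_mulVec_add A u v, hu.2.2, hv.2.2]
  have hw : ∀ i, i ∉ I → (u - v) i = 0 := fun i hi => sub_eq_zero.2 (h i hi)
  rw [← subVec_dotProduct_subMat_mulVec_self_of_forall_notMem A hw] at hdiff
  have hwI : subVec (u - v) I = 0 := by
    by_contra hne
    exact (hI.dotProduct_mulVec_pos hne).not_ge (by simpa using hdiff)
  funext i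
  by_cases hi : i ∈ I
  · exact sub_eq_zero.1 (congrFun hwI ⟨i, hi⟩)
  · exact h i hi

end

theorem stmt10 {n : ℕ} (A : Matrix (Fin n) (Fin n) ℝ) (hA : Copositive A)
    (I : Finset (Fin n)) (hI : (subMat A I).PosDef)
    (u v : Fin n → ℝ) (hu : IsZeroOf A u) (hv : IsZeroOf A v)
    (k l : Fin n) (hk : Supp u \ (I : Set (Fin n)) = {k})
    (hl : Supp v \ (I : Set (Fin n)) = {l})
    (huk : u k = 1) (hvl : v l = 1) :
    A.mulVec u l = A k l + (∑ j ∈ I, u j * A.mulVec v j)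
      - subVec v I ⬝ᵥ (subMat A I).mulVec (subVec u I) ∧
    (u ≠ v → k ≠ l) := by
  refine ⟨mulVec_apply_eq_of_supp_sdiff_eq_singleton hA.1 hk hl huk hvl, fun huv hkl => huv ?_⟩
  subst hkl
  refine hu.eq_of_forall_notMem_eq hA hI hv fun i hi => ?_
  rcases eq_or_ne i k with rfl | hik
  · rw [huk, hvl]
  · rw [(notMem_and_eq_zero_of_supp_sdiff_eq_singleton hk).2 i hi hik,
      (notMem_and_eq_zero_of_supp_sdiff_eq_singleton hl).2 i hi hik]
end

section
/- Let A be an n×n copositive matrix and let u, v be minimal zeros of A with supports I = Supp(u) and J = Supp(v). Assume that J \ I = {k} consists of exactly one element. Then every zero w of A with Supp(w) ⊆ I ∪ J can be written as w = αu + βv with α, β ≥ 0. In particular, up to multiplication by a positive constant, u and v are the only minimal zeros w of A with Supp(w) ⊆ I ∪ J. -/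
open Matrix

lemma dot_symm {n : ℕ} {A : Matrix (Fin n) (Fin n) ℝ} (h : A.IsSymm) (x y : Fin n → ℝ) :
    x ⬝ᵥ A.mulVec y = y ⬝ᵥ A.mulVec x := by
  simp only [dotProduct, mulVec, dotProduct, Finset.mul_sum]
  rw [Finset.sum_comm]
  exact Finset.sum_congr rfl fun i _ => Finset.sum_congr rfl fun j _ => by
    rw [← h.apply i j]; ring

-- Lemma A
lemma mulVec_nonneg {n : ℕ} {A : Matrix (Fin n) (Fin n) ℝ} (hA : Copositive A)
    {w : Fin n → ℝ} (hw : IsZeroOf A w) (i : Fin n) : 0 ≤ A.mulVec w i := by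
  by_contra hneg
  push_neg at hneg
  set r := A.mulVec w i with hr
  set s := A i i with hs
  set e : Fin n → ℝ := Pi.single i 1 with he
  have key : ∀ t : ℝ, 0 < t → 0 ≤ 2 * r + t * s := by
    intro t ht
    have hx : ∀ j, 0 ≤ (w + t • e) j := fun j => by
      by_cases hj : j = i
      · subst hj; simp [he, Pi.single_apply]; have := hw.2.1 j; linarith  -- w i ≥ 0, t > 0
      · simp [he, Pi.single_apply, hj, hw.2.1 j]
    have h0 := hA.2 _ hx
    have hexp : (w + t • e) ⬝ᵥ A.mulVec (w + t • e)
        = w ⬝ᵥ A.mulVec w + t * (2 * r + t * s) := by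
      have h1 : A.mulVec e = fun j => A j i := by
        ext j; simp [he, mulVec, dotProduct, Pi.single_apply]
      have h2 : e ⬝ᵥ A.mulVec w = r := by
        simp [he, dotProduct, Pi.single_apply, hr]
      have h3 : w ⬝ᵥ A.mulVec e = r := by
        rw [dot_symm hA.1]; exact h2
      have h3' : w ⬝ᵥ (fun j => A j i) = r := by rw [← h1]; exact h3
      have h4 : e ⬝ᵥ (fun j => A j i) = s := by
        simp [he, dotProduct, Pi.single_apply, hs]
      simp only [mulVec_add, mulVec_smul, dotProduct_add, add_dotProduct,
        dotProduct_smul, smul_dotProduct, smul_eq_mul, h1]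
      rw [h2, h3', h4]; ring
    rw [hexp, hw.2.2, zero_add] at h0
    nlinarith
  rcases le_or_gt s 0 with hs' | hs'
  · have := key 1 one_pos; nlinarith
  · have hq := key (-r / s) (div_pos (by linarith) hs')
    have he2 : 2 * r + (-r / s) * s = r := by field_simp; ring
    linarith [he2 ▸ hq]

-- Lemma B
lemma mulVec_zero_on_supp {n : ℕ} {A : Matrix (Fin n) (Fin n) ℝ} (hA : Copositive A)
    {w : Fin n → ℝ} (hw : IsZeroOf A w) {i : Fin n} (hi : w i ≠ 0) :
    A.mulVec w i = 0 := by
  have hsum : ∑ j, w j * A.mulVec w j = 0 := hw.2.2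
  have hterm : ∀ j ∈ Finset.univ, 0 ≤ w j * A.mulVec w j :=
    fun j _ => mul_nonneg (hw.2.1 j) (mulVec_nonneg hA hw j)
  have := (Finset.sum_eq_zero_iff_of_nonneg hterm).mp hsum i (Finset.mem_univ i)
  have hwi : 0 < w i := lt_of_le_of_ne (hw.2.1 i) (Ne.symm hi)
  rcases mul_eq_zero.mp this with h | h
  · exact absurd h hi
  · exact h

-- dot product of two zeros: u^T A z ≥ 0 when u ≥ 0 and z zero
lemma dot_nonneg_of_zero {n : ℕ} {A : Matrix (Fin n) (Fin n) ℝ} (hA : Copositive A)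
    {u z : Fin n → ℝ} (hu : ∀ i, 0 ≤ u i) (hz : IsZeroOf A z) :
    0 ≤ u ⬝ᵥ A.mulVec z :=
  Finset.sum_nonneg fun i _ => mul_nonneg (hu i) (mulVec_nonneg hA hz i)

-- Lemma C : proportionality
lemma prop_of_supp_subset {n : ℕ} {A : Matrix (Fin n) (Fin n) ℝ} (hA : Copositive A)
    {u z : Fin n → ℝ} (hu : IsMinimalZeroOf A u) (hz : IsZeroOf A z)
    (hs : Supp z ⊆ Supp u) : ∃ c : ℝ, 0 < c ∧ z = c • u := by
  set F : Finset (Fin n) := Finset.univ.filter (fun i => z i ≠ 0) with hF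
  have hFne : F.Nonempty := by
    rcases Function.ne_iff.mp hz.1 with ⟨i, hi⟩
    exact ⟨i, by simp only [hF, Finset.mem_filter, Finset.mem_univ, true_and]; simpa using hi⟩
  set t := F.inf' hFne (fun i => u i / z i) with ht
  obtain ⟨i0, hi0F, hi0⟩ := F.exists_mem_eq_inf' hFne (fun i => u i / z i)
  have hzpos : ∀ i ∈ F, 0 < z i := fun i hi =>
    lt_of_le_of_ne (hz.2.1 i) (Ne.symm (by simpa [hF] using hi))
  have hupos : ∀ i ∈ F, 0 < u i := fun i hi => by
    have : i ∈ Supp u := hs (by simpa [Supp, hF] using hi)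
    exact lt_of_le_of_ne (hu.1.2.1 i) (Ne.symm this)
  have hti0 : t = u i0 / z i0 := ht.trans hi0
  have htpos : 0 < t := by
    rw [hti0]; exact div_pos (hupos i0 hi0F) (hzpos i0 hi0F)
  set y := u - t • z with hy
  have hynn : ∀ i, 0 ≤ y i := by
    intro i
    by_cases hiF : i ∈ F
    · have h1 : t ≤ u i / z i := Finset.inf'_le _ hiF
      have := (le_div_iff₀ (hzpos i hiF)).mp h1
      simp [hy]; linarith
    · have : z i = 0 := by by_contra h; exact hiF (by simp [hF, h])
      simp [hy, this, hu.1.2.1 i]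
  have hdot : 0 ≤ u ⬝ᵥ A.mulVec z := dot_nonneg_of_zero hA hu.1.2.1 hz
  have hexp : y ⬝ᵥ A.mulVec y = -2 * t * (u ⬝ᵥ A.mulVec z) := by
    have hsym : z ⬝ᵥ A.mulVec u = u ⬝ᵥ A.mulVec z := dot_symm hA.1 z u
    simp only [hy, mulVec_sub, mulVec_smul, dotProduct_sub, sub_dotProduct,
      dotProduct_smul, smul_dotProduct, smul_eq_mul, hsym, hu.1.2.2, hz.2.2]
    ring
  have hge := hA.2 y hynn
  have hdot0 : u ⬝ᵥ A.mulVec z = 0 := by nlinarith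
  have hyq : y ⬝ᵥ A.mulVec y = 0 := by rw [hexp, hdot0]; ring
  have hy0 : y = 0 := by
    by_contra hy0
    apply hu.2
    refine ⟨y, ⟨hy0, hynn, hyq⟩, ?_⟩
    constructor
    · intro i hi
      simp only [Supp, Set.mem_setOf_eq] at hi ⊢
      intro hui
      have hzi : z i = 0 := by
        by_contra h
        exact (hs h) hui
      simp [hy, hui, hzi] at hi
    · intro hsub
      have hi0u : i0 ∈ Supp u := hs (by simpa [Supp, hF] using hi0F)
      have : y i0 = 0 := by
        simp only [hy, Pi.sub_apply, Pi.smul_apply, smul_eq_mul, hti0]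
        rw [div_mul_cancel₀ _ (ne_of_gt (hzpos i0 hi0F))]; ring
      exact (hsub hi0u) this
  refine ⟨t⁻¹, inv_pos.mpr htpos, ?_⟩
  have hu' : u = t • z := by
    have h0 : u - t • z = 0 := hy0
    exact sub_eq_zero.mp h0
  rw [hu', smul_smul, inv_mul_cancel₀ (ne_of_gt htpos), one_smul]


theorem stmt12 {n : ℕ} (A : Matrix (Fin n) (Fin n) ℝ) (hA : Copositive A)
    (u v : Fin n → ℝ) (hu : IsMinimalZeroOf A u) (hv : IsMinimalZeroOf A v)
    (k : Fin n) (hk : Supp v \ Supp u = {k}) :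
    (∀ w, IsZeroOf A w → Supp w ⊆ Supp u ∪ Supp v →
      ∃ α β : ℝ, 0 ≤ α ∧ 0 ≤ β ∧ w = α • u + β • v) ∧
    (∀ w, IsMinimalZeroOf A w → Supp w ⊆ Supp u ∪ Supp v →
      (∃ c : ℝ, 0 < c ∧ w = c • u) ∨ (∃ c : ℝ, 0 < c ∧ w = c • v)) := by
  have huz := hu.1
  have hvz := hv.1
  have hkd : k ∈ Supp v \ Supp u := by rw [hk]; exact rfl
  have hkv : v k ≠ 0 := hkd.1
  have hku : u k = 0 := not_not.mp hkd.2
  have hvk : 0 < v k := lt_of_le_of_ne (hvz.2.1 k) (Ne.symm hkv)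
  have hsubv : ∀ i, i ≠ k → v i ≠ 0 → u i ≠ 0 := by
    intro i hik hvi
    by_contra hui
    have : i ∈ Supp v \ Supp u := ⟨hvi, not_not.mpr hui⟩
    rw [hk] at this
    exact hik this
  have hi0 : ∃ i0, u i0 ≠ 0 ∧ v i0 = 0 := by
    by_contra h
    push_neg at h
    apply hv.2
    refine ⟨u, huz, ?_⟩
    rw [Set.ssubset_def]
    constructor
    · intro i hi
      exact h i hi
    · intro hcon
      exact (hcon hkv) hku
  obtain ⟨i0, hi0u, hi0v⟩ := hi0
  have hi0pos : 0 < u i0 := lt_of_le_of_ne (huz.2.1 i0) (Ne.symm hi0u)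
  have part1 : ∀ w, IsZeroOf A w → Supp w ⊆ Supp u ∪ Supp v →
      ∃ α β : ℝ, 0 ≤ α ∧ 0 ≤ β ∧ w = α • u + β • v := by
    intro w hw hsw
    have hsw' : ∀ i, i ≠ k → w i ≠ 0 → u i ≠ 0 := by
      intro i hik hwi
      rcases hsw hwi with h | h
      · exact h
      · exact hsubv i hik h
    by_cases hwk : w k = 0
    · obtain ⟨c, hc, hcw⟩ := prop_of_supp_subset hA hu hw (by
        intro i hi
        by_cases hik : i = k
        · subst hik; exact absurd hwk hi
        · exact hsw' i hik hi)
      exact ⟨c, 0, le_of_lt hc, le_rfl, by rw [hcw]; simp⟩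
    · have hwkpos : 0 < w k := lt_of_le_of_ne (hw.2.1 k) (Ne.symm hwk)
      set β := w k / v k with hβ
      have hβpos : 0 < β := div_pos hwkpos hvk
      set F : Finset (Fin n) := Finset.univ.filter (fun i => u i ≠ 0) with hF
      have hFne : F.Nonempty := ⟨i0, by simp [hF, hi0u]⟩
      set c := 1 + F.sup' hFne (fun i => β * v i / u i) with hc
      have hupos : ∀ i ∈ F, 0 < u i := fun i hi =>
        lt_of_le_of_ne (huz.2.1 i) (Ne.symm (Finset.mem_filter.mp hi).2)
      have hcsup : 0 ≤ F.sup' hFne (fun i => β * v i / u i) := by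
        have h1 : β * v i0 / u i0 ≤ F.sup' hFne (fun i => β * v i / u i) :=
          Finset.le_sup' (fun i => β * v i / u i) (by simp [hF, hi0u])
        have h2 : 0 ≤ β * v i0 / u i0 :=
          div_nonneg (mul_nonneg (le_of_lt hβpos) (hvz.2.1 i0)) (le_of_lt hi0pos)
        linarith
      have hcpos : 0 < c := by rw [hc]; linarith
      have hcge : ∀ i, u i ≠ 0 → β * v i ≤ c * u i := by
        intro i hi
        have hiF : i ∈ F := by simp [hF, hi]
        have hui : 0 < u i := hupos i hiF
        have h1 : β * v i / u i ≤ F.sup' hFne (fun i => β * v i / u i) :=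
          Finset.le_sup' (fun i => β * v i / u i) hiF
        have h2 : β * v i / u i ≤ c := by rw [hc]; linarith
        calc β * v i = (β * v i / u i) * u i := by field_simp
          _ ≤ c * u i := mul_le_mul_of_nonneg_right h2 (le_of_lt hui)
      set z := w + c • u - β • v with hz
      have hzval : ∀ i, z i = w i + c * u i - β * v i := fun i => rfl
      have hznn : ∀ i, 0 ≤ z i := by
        intro i
        rw [hzval]
        by_cases hui : u i = 0
        · by_cases hik : i = k
          · rw [hik] at hui ⊢
            have hb : β * v k = w k := div_mul_cancel₀ _ (ne_of_gt hvk)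
            rw [hui, mul_zero]; linarith
          · have hvi : v i = 0 := by
              by_contra hvi; exact (hsubv i hik hvi) hui
            have hwi : w i = 0 := by
              by_contra hwi; exact (hsw' i hik hwi) hui
            simp [hui, hvi, hwi]
        · have := hcge i hui
          have := hw.2.1 i
          linarith
      have hzsupp : ∀ i, z i ≠ 0 → u i ≠ 0 := by
        intro i hzi
        by_contra hui
        apply hzi
        rw [hzval]
        by_cases hik : i = k
        · rw [hik] at hui ⊢
          have hb : β * v k = w k := div_mul_cancel₀ _ (ne_of_gt hvk)
          rw [hui, mul_zero]; linarith
        · have hvi : v i = 0 := by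
            by_contra hvi; exact (hsubv i hik hvi) hui
          have hwi : w i = 0 := by
            by_contra hwi; exact (hsw' i hik hwi) hui
          simp [hui, hvi, hwi]
      have hz0 : z ≠ 0 := by
        intro h
        have : z i0 = 0 := by rw [h]; rfl
        rw [hzval, hi0v] at this
        have := hw.2.1 i0
        nlinarith
      have hAu0 : ∀ i, u i ≠ 0 → A.mulVec u i = 0 :=
        fun i hi => mulVec_zero_on_supp hA huz hi
      have hwAu : w ⬝ᵥ A.mulVec u = w k * A.mulVec u k := by
        rw [dotProduct]
        refine Finset.sum_eq_single k ?_ (fun h => absurd (Finset.mem_univ k) h)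
        intro i _ hik
        by_cases hwi : w i = 0
        · simp [hwi]
        · rw [hAu0 i (hsw' i hik hwi)]; ring
      have hvAu : v ⬝ᵥ A.mulVec u = v k * A.mulVec u k := by
        rw [dotProduct]
        refine Finset.sum_eq_single k ?_ (fun h => absurd (Finset.mem_univ k) h)
        intro i _ hik
        by_cases hvi : v i = 0
        · simp [hvi]
        · rw [hAu0 i (hsubv i hik hvi)]; ring
      have hwAv_nn : 0 ≤ w ⬝ᵥ A.mulVec v := by
        rw [dot_symm hA.1]
        exact dot_nonneg_of_zero hA hvz.2.1 hw
      have hβvk : β * v k = w k := div_mul_cancel₀ _ (ne_of_gt hvk)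
      rw [← hβvk] at hwAu
      have hexp : z ⬝ᵥ A.mulVec z = -2 * β * (w ⬝ᵥ A.mulVec v) := by
        have hsym1 : u ⬝ᵥ A.mulVec w = w ⬝ᵥ A.mulVec u := dot_symm hA.1 u w
        have hsym2 : v ⬝ᵥ A.mulVec w = w ⬝ᵥ A.mulVec v := dot_symm hA.1 v w
        have hsym3 : u ⬝ᵥ A.mulVec v = v ⬝ᵥ A.mulVec u := dot_symm hA.1 u v
        simp only [hz, mulVec_add, mulVec_sub, mulVec_smul, dotProduct_add,
          dotProduct_sub, add_dotProduct, sub_dotProduct, dotProduct_smul,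
          smul_dotProduct, smul_eq_mul, hsym1, hsym2, hsym3, hw.2.2, huz.2.2,
          hvz.2.2, hwAu, hvAu]
        ring
      have hzq : z ⬝ᵥ A.mulVec z = 0 := by
        have h1 := hA.2 z hznn
        have h2 : z ⬝ᵥ A.mulVec z ≤ 0 := by rw [hexp]; nlinarith
        linarith
      obtain ⟨a, hapos, haz⟩ := prop_of_supp_subset hA hu ⟨hz0, hznn, hzq⟩ hzsupp
      have hzi : ∀ i, w i + c * u i - β * v i = a * u i := by
        intro i
        have := congrFun haz i
        rw [hzval] at this
        simpa using this
      have hac : 0 ≤ a - c := by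
        have h1 := hzi i0
        have h2 := hw.2.1 i0
        rw [hi0v] at h1
        nlinarith
      refine ⟨a - c, β, hac, le_of_lt hβpos, ?_⟩
      ext i
      have := hzi i
      simp only [Pi.add_apply, Pi.smul_apply, smul_eq_mul]
      linarith
  refine ⟨part1, ?_⟩
  intro w hw hsw
  obtain ⟨α, β, hα, hβ, hwab⟩ := part1 w hw.1 hsw
  rcases eq_or_lt_of_le hβ with hβ0 | hβ0
  · left
    have hwa : w = α • u := by rw [hwab, ← hβ0]; simp
    have hα0 : α ≠ 0 := by
      intro h
      apply hw.1.1
      rw [hwa, h, zero_smul]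
    exact ⟨α, lt_of_le_of_ne hα (Ne.symm hα0), hwa⟩
  · rcases eq_or_lt_of_le hα with hα0 | hα0
    · right
      exact ⟨β, hβ0, by rw [hwab, ← hα0]; simp⟩
    · exfalso
      apply hw.2
      refine ⟨u, huz, ?_⟩
      rw [Set.ssubset_def]
      constructor
      · intro i hi
        have hui : 0 < u i := lt_of_le_of_ne (huz.2.1 i) (Ne.symm hi)
        have hvi := hvz.2.1 i
        have hwi : w i = α * u i + β * v i := by rw [hwab]; rfl
        show w i ≠ 0
        nlinarith
      · intro hcon
        have hwk : w k ≠ 0 := by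
          have h1 : w k = α * u k + β * v k := by rw [hwab]; rfl
          rw [hku] at h1
          nlinarith
        exact hkd.2 (hcon hwk)
end
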